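/- arXiv:2310.19732 — 5 statements merged into one kernel-verified Lean document; each statement's English description precedes it below -/
import Mathlib

section
/- The weak order on S_n is self-dual: the map f sending π to the permutation whose inversion set is inv(w_0) \ inv(π) (where w_0 is the longest element) is an involutive order-reversing automorphism, and it satisfies π ∧ f(π) = e and π ∨ f(π) = w_0 for all π. -/
/-- The inversion set of a permutation of `Fin n`. -/
def invSet {n : ℕ} (π : Equiv.Perm (Fin n)) : Set (Fin n × Fin n) :=
  {p | p.1 < p.2 ∧ π.symm p.2 < π.symm p.1}

/-!
Inversion sets determine permutations: `σ⁻¹ i < σ⁻¹ j` can be read off from whether the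
pair `{i, j}` is an inversion of `σ`. Right multiplication by `w₀` reverses all positions, so it
complements the inversion set inside `inv(w₀)`, the set of all pairs `i < j`; complementation
inside a fixed set is an involutive antitone map. Finally a common lower bound of `π`
and `π w₀` has inversions in `inv(π) ∩ (inv(w₀) \ inv(π)) = ∅ = inv(e)`, and a common upper
bound contains `inv(π) ∪ (inv(w₀) \ inv(π)) = inv(w₀)`.
-/

section

variable {n : ℕ}

lemma symm_lt_symm_iff_invSet (σ : Equiv.Perm (Fin n)) (i j : Fin n) :
    σ.symm i < σ.symm j ↔
      (i < j ∧ (i, j) ∉ invSet σ) ∨ (j < i ∧ (j, i) ∈ invSet σ) := by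
  simp only [invSet, Set.mem_ofPred_eq]
  rcases lt_trichotomy i j with hij | rfl | hji
  · have hne : σ.symm i ≠ σ.symm j := σ.symm.injective.ne hij.ne
    simp only [hij, not_lt_of_gt hij, true_and, false_and, or_false, not_lt]
    exact ⟨le_of_lt, fun h => lt_of_le_of_ne h hne⟩
  · simp
  · simp only [hji, not_lt_of_gt hji, true_and, false_and, false_or]

lemma invSet_injective : Function.Injective (invSet : Equiv.Perm (Fin n) → _) := by
  intro σ τ h
  have hmono : StrictMono (τ.symm ∘ σ) := fun x y hxy => by
    have hσ : σ.symm (σ x) < σ.symm (σ y) := by simpa using hxy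
    rw [symm_lt_symm_iff_invSet, h, ← symm_lt_symm_iff_invSet] at hσ
    exact hσ
  exact Equiv.ext fun x => τ.symm_apply_eq.1 (congrFun hmono.eq_id x)

lemma invSet_revPerm : invSet (Fin.revPerm : Equiv.Perm (Fin n)) = {p | p.1 < p.2} := by
  ext p
  simp [invSet, Fin.revPerm_symm, and_self]

lemma invSet_subset_invSet_revPerm (π : Equiv.Perm (Fin n)) :
    invSet π ⊆ invSet Fin.revPerm := by
  rw [invSet_revPerm]
  exact fun _ hp => hp.1

lemma invSet_one : invSet (1 : Equiv.Perm (Fin n)) = ∅ := by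
  ext p
  simpa [invSet, ← Equiv.Perm.inv_def] using le_of_lt

lemma invSet_mul_revPerm (π : Equiv.Perm (Fin n)) :
    invSet (π * Fin.revPerm) = invSet Fin.revPerm \ invSet π := by
  ext ⟨i, j⟩
  rw [invSet_revPerm]
  simp only [invSet, Set.mem_sdiff, Set.mem_ofPred_eq, Equiv.Perm.mul_def, Equiv.symm_trans_apply,
    Fin.revPerm_symm, Fin.revPerm_apply, Fin.rev_lt_rev, not_and, not_lt]
  refine and_congr_right fun hij => ⟨fun h _ => h.le, fun h => lt_of_le_of_ne (h hij) ?_⟩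
  exact π.symm.injective.ne hij.ne

end

/-- The weak order on `S_n` is self-dual: the map `f` sending `π` to the permutation with
inversion set `inv(w₀) \ inv(π)` (where `w₀ = n…21` is the longest element, `Fin.revPerm`)
is an involutive order-reversing automorphism, and `π ∧ f(π) = e`, `π ∨ f(π) = w₀` (the
only common lower bound of `π` and `f π` is the identity, and the only common upper bound
is `w₀`). -/
theorem weak_order_self_dual (n : ℕ) :
    ∃ f : Equiv.Perm (Fin n) → Equiv.Perm (Fin n),
      (∀ π, invSet (f π) = invSet (Fin.revPerm : Equiv.Perm (Fin n)) \ invSet π) ∧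
      (∀ π, f (f π) = π) ∧
      (∀ π σ, invSet π ⊆ invSet σ ↔ invSet (f σ) ⊆ invSet (f π)) ∧
      (∀ π τ, invSet τ ⊆ invSet π → invSet τ ⊆ invSet (f π) → τ = 1) ∧
      (∀ π τ, invSet π ⊆ invSet τ → invSet (f π) ⊆ invSet τ →
        τ = (Fin.revPerm : Equiv.Perm (Fin n))) := by
  refine ⟨fun π => π * Fin.revPerm, invSet_mul_revPerm, fun π => ?_, fun π σ => ?_,
    fun π τ hπ hfπ => ?_, fun π τ hπ hfπ => ?_⟩
  · ext x
    simp
  · rw [invSet_mul_revPerm, invSet_mul_revPerm, Set.sdiff_subset_sdiff_iff_subset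
      (invSet_subset_invSet_revPerm σ) (invSet_subset_invSet_revPerm π)]
  · apply invSet_injective
    rw [invSet_one, ← Set.subset_empty_iff,
      ← Set.inter_sdiff_self (invSet π) (invSet Fin.revPerm)]
    exact Set.subset_inter hπ (invSet_mul_revPerm π ▸ hfπ)
  · apply invSet_injective
    refine (invSet_subset_invSet_revPerm τ).antisymm ?_
    rw [← Set.union_sdiff_cancel (invSet_subset_invSet_revPerm π), ← invSet_mul_revPerm]
    exact Set.union_subset hπ hfπ
end

section
/- The bracket set map is a bijection from binary trees on n nodes (with in-order labeling) to the family of subsets B of pairs such that each component B_i = {j : (i,j) ∈ B} is either empty or an interval {i+1, i+2, …, i+l} for some l > 0, and if j ∈ B_i then B_j ⊆ B_i. -/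
/-- Binary trees: each internal node has exactly a left and a right subtree. -/
inductive BTree : Type
  | leaf : BTree
  | node : BTree → BTree → BTree

namespace BTree

/-- Number of (internal) nodes of a binary tree. -/
def size : BTree → ℕ
  | leaf => 0
  | node l r => size l + size r + 1

/-- The bracket set of a binary tree whose nodes are labeled in in-order by
`o+1, …, o+size T`: pairs `(i,j)` such that node `j` lies in the right subtree of
node `i`. -/
def bracket : BTree → ℕ → Set (ℕ × ℕ)
  | leaf, _ => ∅
  | node l r, o =>
      bracket l o ∪ bracket r (o + size l + 1) ∪
        {p | p.1 = o + size l + 1 ∧ o + size l + 1 < p.2 ∧ p.2 ≤ o + size l + 1 + size r}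

end BTree

/-- The `i`-th component `B_i` of a set of pairs. -/
def comp (B : Set (ℕ × ℕ)) (i : ℕ) : Set ℕ := {j | (i, j) ∈ B}

/-!
In a tree `node l r` whose labels are `o+1, …, o+n`, the root carries the label
`m = o + size l + 1`. It can be read off the bracket set `B`: `B_m = (m, o+n]`, and no pair
starting left of `m` ends at or beyond `m`; these two properties determine `m`. Conversely, in an
abstract family satisfying the interval and nesting conditions, the least `i` with
`(i, o+n) ∈ B` (or `o+n` itself if there is none) has both properties. Cutting `B` at its root
leaves the pairs starting left of `m`, those starting right of `m`, and the row `B_m`, which is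
exactly the recursion defining `bracket`; so injectivity and surjectivity follow by induction.
-/

/-- Labels are `o+1, …, o+n`. -/
structure IsBracketSet (o n : ℕ) (B : Set (ℕ × ℕ)) : Prop where
  bounds : ∀ p ∈ B, o < p.1 ∧ p.1 < p.2 ∧ p.2 ≤ o + n
  comp_eq : ∀ i, comp B i = ∅ ∨ ∃ l > 0, comp B i = Set.Ioc i (i + l)
  comp_subset : ∀ i j, (i, j) ∈ B → comp B j ⊆ comp B i

structure IsBracketRoot (o n : ℕ) (B : Set (ℕ × ℕ)) (m : ℕ) : Prop where
  lt : o < m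
  le : m ≤ o + n
  comp_eq : comp B m = Set.Ioc m (o + n)
  snd_lt : ∀ p ∈ B, p.1 < m → p.2 < m

section BracketSet

variable {o n m : ℕ} {B : Set (ℕ × ℕ)}

theorem IsBracketRoot.le_of_isBracketRoot {m' : ℕ} (h : IsBracketRoot o n B m)
    (h' : IsBracketRoot o n B m') : m' ≤ m := by
  by_contra! hlt
  have hmem : (m, m') ∈ B := show m' ∈ comp B m from h.comp_eq ▸ ⟨hlt, h'.le⟩
  exact lt_irrefl m' (h'.snd_lt _ hmem hlt)

theorem IsBracketRoot.unique {m' : ℕ} (h : IsBracketRoot o n B m)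
    (h' : IsBracketRoot o n B m') : m = m' :=
  le_antisymm (h'.le_of_isBracketRoot h) (h.le_of_isBracketRoot h')

theorem IsBracketRoot.eq_union (h : IsBracketRoot o n B m) :
    B = {p ∈ B | p.1 < m} ∪ {p ∈ B | m < p.1} ∪
      {p | p.1 = m ∧ m < p.2 ∧ p.2 ≤ o + n} := by
  ext ⟨i, j⟩
  rcases lt_trichotomy i m with hi | rfl | hi
  · simp [hi, hi.ne, hi.not_gt]
  · have hrow : (i, j) ∈ B ↔ j ∈ Set.Ioc i (o + n) := by rw [← h.comp_eq]; rfl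
    simp [hrow]
  · simp [hi, hi.ne', hi.not_gt]

theorem IsBracketSet.mem_of_lt_of_le {i j k : ℕ} (hB : IsBracketSet o n B) (hij : (i, j) ∈ B)
    (hik : i < k) (hkj : k ≤ j) : (i, k) ∈ B := by
  rcases hB.comp_eq i with hi | ⟨l, -, hi⟩
  · exact absurd (show j ∈ comp B i from hij) (hi ▸ Set.notMem_empty j)
  · have hj : j ∈ Set.Ioc i (i + l) := hi ▸ hij
    exact show k ∈ comp B i from hi ▸ ⟨hik, hkj.trans hj.2⟩

theorem IsBracketSet.sep_fst {o' n' : ℕ} (hB : IsBracketSet o n B) (S : Set ℕ)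
    (hS : ∀ p ∈ B, p.1 ∈ S → o' < p.1 ∧ p.2 ≤ o' + n') :
    IsBracketSet o' n' {p ∈ B | p.1 ∈ S} where
  bounds p hp := ⟨(hS p hp.1 hp.2).1, (hB.bounds p hp.1).2.1, (hS p hp.1 hp.2).2⟩
  comp_eq i := by
    by_cases hi : i ∈ S
    · have : comp {p ∈ B | p.1 ∈ S} i = comp B i := by ext j; simp [comp, hi]
      exact this ▸ hB.comp_eq i
    · left; ext j; simp [comp, hi]
  comp_subset i j hij k hk := And.intro (hB.comp_subset i j hij.1 hk.1) hij.2

theorem IsBracketSet.exists_isBracketRoot (hB : IsBracketSet o n B) (hn : 0 < n) :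
    ∃ m, IsBracketRoot o n B m := by
  have hex : ∃ i, (i, o + n) ∈ B ∨ i = o + n := ⟨o + n, Or.inr rfl⟩
  classical
  set m := Nat.find hex
  have hm : (m, o + n) ∈ B ∨ m = o + n := Nat.find_spec hex
  have hmle : m ≤ o + n := Nat.find_min' hex (Or.inr rfl)
  have hIoc : ∀ k, m < k → k ≤ o + n → (m, k) ∈ B := fun k hmk hk =>
    hm.elim (fun hmN => hB.mem_of_lt_of_le hmN hmk hk) (fun h => absurd hk (by omega))
  refine ⟨m, ?_, hmle, ?_, ?_⟩
  · rcases hm with h | h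
    · exact (hB.bounds _ h).1
    · omega
  · ext k
    exact ⟨fun hk => ⟨(hB.bounds _ hk).2.1, (hB.bounds _ hk).2.2⟩, fun hk => hIoc k hk.1 hk.2⟩
  · intro p hp hpm
    by_contra! hmp
    have hpm' : (p.1, m) ∈ B := hB.mem_of_lt_of_le hp hpm hmp
    have hpN : (p.1, o + n) ∈ B := by
      rcases hm with h | h
      · exact hB.comp_subset _ _ hpm' h
      · exact h ▸ hpm'
    exact Nat.find_min hex hpm (Or.inl hpN)

end BracketSet

namespace BTree

variable {l r : BTree} {o : ℕ} {p : ℕ × ℕ}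

theorem mem_bracket_node :
    p ∈ bracket (node l r) o ↔ p ∈ bracket l o ∨ p ∈ bracket r (o + size l + 1) ∨
      (p.1 = o + size l + 1 ∧ o + size l + 1 < p.2 ∧ p.2 ≤ o + size l + 1 + size r) := by
  simp only [bracket, Set.mem_union, Set.mem_ofPred_eq, or_assoc]

theorem bounds_of_mem_bracket : ∀ {T : BTree} {o : ℕ} {p : ℕ × ℕ}, p ∈ bracket T o →
    o < p.1 ∧ p.1 < p.2 ∧ p.2 ≤ o + size T
  | leaf, _, _, h => h.elim
  | node l r, o, p, h => by
    have hl := @bounds_of_mem_bracket l o p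
    have hr := @bounds_of_mem_bracket r (o + size l + 1) p
    rcases mem_bracket_node.1 h with h | h | h
    · have := hl h; simp only [size]; omega
    · have := hr h; simp only [size]; omega
    · simp only [size]; omega

theorem comp_bracket_node_of_lt {i : ℕ} (hi : i < o + size l + 1) :
    comp (bracket (node l r) o) i = comp (bracket l o) i := by
  ext j
  refine ⟨fun h => ?_, fun h => mem_bracket_node.2 (Or.inl h)⟩
  rcases mem_bracket_node.1 h with h | h | h
  · exact h
  · have := bounds_of_mem_bracket h; simp only at this; omega
  · simp only at h; omega

theorem comp_bracket_node_of_gt {i : ℕ} (hi : o + size l + 1 < i) :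
    comp (bracket (node l r) o) i = comp (bracket r (o + size l + 1)) i := by
  ext j
  refine ⟨fun h => ?_, fun h => mem_bracket_node.2 (Or.inr (Or.inl h))⟩
  rcases mem_bracket_node.1 h with h | h | h
  · have := bounds_of_mem_bracket h; simp only at this; omega
  · exact h
  · simp only at h; omega

theorem comp_bracket_node_self :
    comp (bracket (node l r) o) (o + size l + 1) =
      Set.Ioc (o + size l + 1) (o + size l + 1 + size r) := by
  ext j
  refine ⟨fun h => ?_, fun h => mem_bracket_node.2 (Or.inr (Or.inr ⟨rfl, h⟩))⟩
  rcases mem_bracket_node.1 h with h | h | h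
  · have := bounds_of_mem_bracket h; simp only at this; omega
  · have := bounds_of_mem_bracket h; simp only at this; omega
  · exact h.2

theorem isBracketSet_bracket (T : BTree) (o : ℕ) : IsBracketSet o (size T) (bracket T o) := by
  induction T generalizing o with
  | leaf => exact ⟨fun _ h => h.elim, fun _ => Or.inl rfl, fun _ _ h => h.elim⟩
  | node l r ihl ihr =>
    set m := o + size l + 1
    refine ⟨fun p => bounds_of_mem_bracket, fun i => ?_, fun i j hij => ?_⟩
    · rcases lt_trichotomy i m with hi | rfl | hi
      · exact comp_bracket_node_of_lt hi ▸ (ihl o).comp_eq i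
      · rw [comp_bracket_node_self]
        rcases (size r).eq_zero_or_pos with h | h
        · exact Or.inl (by simp [h])
        · exact Or.inr ⟨size r, h, rfl⟩
      · exact comp_bracket_node_of_gt hi ▸ (ihr m).comp_eq i
    · rcases mem_bracket_node.1 hij with h | h | ⟨rfl, hj, -⟩
      · have := bounds_of_mem_bracket h
        rw [comp_bracket_node_of_lt (by omega), comp_bracket_node_of_lt (by omega)]
        exact (ihl o).comp_subset i j h
      · have := bounds_of_mem_bracket h
        rw [comp_bracket_node_of_gt (by omega), comp_bracket_node_of_gt (by omega)]
        exact (ihr m).comp_subset i j h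
      · rw [comp_bracket_node_of_gt hj, comp_bracket_node_self]
        intro k hk
        have := (ihr m).bounds _ hk
        exact ⟨hj.trans this.2.1, this.2.2⟩

theorem isBracketRoot_bracket_node (l r : BTree) (o : ℕ) :
    IsBracketRoot o (size (node l r)) (bracket (node l r) o) (o + size l + 1) where
  lt := by omega
  le := by simp only [size]; omega
  comp_eq := by rw [comp_bracket_node_self]; simp only [size]; congr 1; omega
  snd_lt p hp hpm := by
    rcases mem_bracket_node.1 hp with h | h | h
    · exact (bounds_of_mem_bracket h).2.2.trans_lt (by omega)
    · have := bounds_of_mem_bracket h; omega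
    · omega

theorem sep_fst_lt_bracket_node :
    {p ∈ bracket (node l r) o | p.1 < o + size l + 1} = bracket l o := by
  ext p
  refine ⟨fun ⟨hp, hpm⟩ => ?_, fun hp => ⟨mem_bracket_node.2 (Or.inl hp), ?_⟩⟩
  · rcases mem_bracket_node.1 hp with h | h | h
    · exact h
    · have := bounds_of_mem_bracket h; omega
    · omega
  · have := bounds_of_mem_bracket hp; omega

theorem sep_lt_fst_bracket_node :
    {p ∈ bracket (node l r) o | o + size l + 1 < p.1} = bracket r (o + size l + 1) := by
  ext p
  refine ⟨fun ⟨hp, hpm⟩ => ?_, fun hp => ⟨mem_bracket_node.2 (Or.inr (Or.inl hp)), ?_⟩⟩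
  · rcases mem_bracket_node.1 hp with h | h | h
    · have := bounds_of_mem_bracket h; omega
    · exact h
    · omega
  · exact (bounds_of_mem_bracket hp).1

theorem eq_of_bracket_eq : ∀ {T T' : BTree} {o : ℕ}, size T = size T' →
    bracket T o = bracket T' o → T = T'
  | leaf, leaf, _, _, _ => rfl
  | leaf, node _ _, _, hs, _ | node _ _, leaf, _, hs, _ => by simp [size] at hs
  | node l r, node l' r', o, hs, hB => by
    have hroot : o + size l + 1 = o + size l' + 1 :=
      (isBracketRoot_bracket_node l r o).unique (hs ▸ hB ▸ isBracketRoot_bracket_node l' r' o)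
    have hl : size l = size l' := by omega
    have hr : size r = size r' := by simp only [size] at hs; omega
    have hBl : bracket l o = bracket l' o := by
      rw [← sep_fst_lt_bracket_node (l := l) (r := r) (o := o), hB, hl, sep_fst_lt_bracket_node]
    have hBr : bracket r (o + size l + 1) = bracket r' (o + size l + 1) := by
      rw [← sep_lt_fst_bracket_node (l := l), hB, hl, sep_lt_fst_bracket_node]
    rw [eq_of_bracket_eq hl hBl, eq_of_bracket_eq hr (hl ▸ hBr)]

theorem exists_bracket_eq (n : ℕ) : ∀ {o : ℕ} {B : Set (ℕ × ℕ)}, IsBracketSet o n B →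
    ∃ T : BTree, size T = n ∧ bracket T o = B := by
  induction n using Nat.strong_induction_on with
  | _ n ih =>
  intro o B hB
  rcases n.eq_zero_or_pos with rfl | hn
  · refine ⟨leaf, rfl, (Set.eq_empty_of_forall_notMem fun p hp => ?_).symm⟩
    have := hB.bounds p hp; omega
  obtain ⟨m, hm⟩ := hB.exists_isBracketRoot hn
  have hom := hm.lt
  have hmn := hm.le
  obtain ⟨l, hl, hlB⟩ := ih (m - 1 - o) (by omega)
    (hB.sep_fst {i | i < m} (n' := m - 1 - o) fun p hp hpm =>
      have := hm.snd_lt p hp hpm; ⟨(hB.bounds p hp).1, by omega⟩)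
  obtain ⟨r, hr, hrB⟩ := ih (o + n - m) (by omega)
    (hB.sep_fst {i | m < i} (o' := m) (n' := o + n - m) fun p hp hmp =>
      have := hB.bounds p hp; ⟨hmp, by omega⟩)
  have hlm : o + size l + 1 = m := by omega
  refine ⟨node l r, by simp only [size]; omega, ?_⟩
  rw [hm.eq_union, bracket, hlm, hlB, hrB]
  congr! 3
  omega

theorem bijOn_bracket (o n : ℕ) :
    Set.BijOn (bracket · o) {T : BTree | T.size = n} {B | IsBracketSet o n B} :=
  ⟨fun T hT => hT ▸ isBracketSet_bracket T o,
    fun _ hT _ hT' h => eq_of_bracket_eq (hT.trans hT'.symm) h,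
    fun _ hB => exists_bracket_eq n hB⟩

end BTree

theorem isBracketSet_zero_iff {n : ℕ} {B : Set (ℕ × ℕ)} :
    IsBracketSet 0 n B ↔
      (∀ p ∈ B, 1 ≤ p.1 ∧ p.1 < p.2 ∧ p.2 ≤ n) ∧
        (∀ i : ℕ, comp B i = ∅ ∨ ∃ l > 0, comp B i = Set.Ioc i (i + l)) ∧
        (∀ i j : ℕ, (i, j) ∈ B → comp B j ⊆ comp B i) := by
  refine ⟨fun ⟨h₁, h₂, h₃⟩ => ⟨fun p hp => ?_, h₂, h₃⟩,
    fun ⟨h₁, h₂, h₃⟩ => ⟨fun p hp => ?_, h₂, h₃⟩⟩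
  · have := h₁ p hp; omega
  · have := h₁ p hp; omega

/-- The bracket set map is a bijection from in-order labeled binary trees on `n` nodes
onto the sets `B` of pairs from `[n]` such that each component `B_i` is empty or an
interval `{i+1, …, i+l}` with `l > 0`, and `j ∈ B_i` implies `B_j ⊆ B_i`. -/
theorem bracket_set_bijection (n : ℕ) :
    Set.BijOn (fun T => BTree.bracket T 0) {T : BTree | T.size = n}
      {B : Set (ℕ × ℕ) |
        (∀ p ∈ B, 1 ≤ p.1 ∧ p.1 < p.2 ∧ p.2 ≤ n) ∧
        (∀ i : ℕ, comp B i = ∅ ∨ ∃ l > 0, comp B i = Set.Ioc i (i + l)) ∧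
        (∀ i j : ℕ, (i, j) ∈ B → comp B j ⊆ comp B i)} := by
  simpa only [isBracketSet_zero_iff] using BTree.bijOn_bracket 0 n
end

section
/- In the Tamari lattice on binary trees with n nodes, the meet T ∧ T' of two binary trees exists and its bracket components satisfy B(T ∧ T')_i = B(T)_i ∩ B(T')_i for all i. Consequently the rotation order on binary trees is a lattice. -/
namespace BTree

/-- The bracket vector: `vec T o i = i + size of right subtree of node i`. -/
def vec : BTree → ℕ → ℕ → ℕ
  | leaf, _, i => i
  | node l r, o, i =>
      if i ≤ o + size l then vec l o i
      else if i = o + size l + 1 then o + size l + 1 + size r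
      else vec r (o + size l + 1) i

lemma vec_ge : ∀ (T : BTree) (o i : ℕ), i ≤ vec T o i
  | leaf, _, _ => le_rfl
  | node l r, o, i => by
      unfold vec
      split
      · exact vec_ge l o i
      · split
        · omega
        · exact vec_ge r (o + size l + 1) i

lemma vec_le : ∀ (T : BTree) (o i : ℕ), o < i → i ≤ o + size T → vec T o i ≤ o + size T
  | leaf, o, i, h1, h2 => by simp [size] at h2; omega
  | node l r, o, i, h1, h2 => by
      unfold vec
      split
      · have := vec_le l o i h1 (by omega)
        simp [size]; omega
      · split
        · simp [size]; omega
        · have hgt : o + size l + 1 < i := by omega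
          have := vec_le r (o + size l + 1) i hgt (by simp [size] at h2 ⊢; omega)
          simp [size] at this ⊢; omega

lemma bracket_eq : ∀ (T : BTree) (o : ℕ),
    bracket T o = {p : ℕ × ℕ | o < p.1 ∧ p.1 ≤ o + size T ∧ p.1 < p.2 ∧ p.2 ≤ vec T o p.1}
  | leaf, o => by
      ext ⟨i, j⟩; simp [bracket, size]; omega
  | node l r, o => by
      ext ⟨i, j⟩
      simp only [bracket, bracket_eq l o, bracket_eq r (o + size l + 1),
        Set.mem_union, Set.mem_setOf_eq, size, vec]
      constructor
      · rintro ((⟨h1, h2, h3, h4⟩ | ⟨h1, h2, h3, h4⟩) | ⟨h1, h2, h3⟩)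
        · have hle : i ≤ o + size l := h2
          rw [if_pos hle]
          refine ⟨h1, by omega, h3, h4⟩
        · have : ¬ i ≤ o + size l := by omega
          rw [if_neg this, if_neg (by omega)]
          exact ⟨by omega, by omega, h3, h4⟩
        · rw [if_neg (by omega), if_pos h1]
          exact ⟨by omega, by omega, by omega, by omega⟩
      · rintro ⟨h1, h2, h3, h4⟩
        by_cases hc : i ≤ o + size l
        · rw [if_pos hc] at h4
          exact Or.inl (Or.inl ⟨h1, hc, h3, h4⟩)
        · by_cases hc2 : i = o + size l + 1
          · rw [if_neg hc, if_pos hc2] at h4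
            exact Or.inr ⟨hc2, by omega, by omega⟩
          · rw [if_neg hc, if_neg hc2] at h4
            exact Or.inl (Or.inr ⟨by omega, by omega, h3, h4⟩)

lemma vec_noncross : ∀ (T : BTree) (o i j : ℕ), o < i → i ≤ o + size T → i < j →
    j ≤ vec T o i → vec T o j ≤ vec T o i
  | leaf, o, i, j, h1, h2, h3, h4 => by simp [size] at h2; omega
  | node l r, o, i, j, h1, h2, h3, h4 => by
      unfold vec at h4 ⊢
      by_cases hc : i ≤ o + size l
      · rw [if_pos hc] at h4 ⊢
        have hvi : vec l o i ≤ o + size l := vec_le l o i h1 hc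
        have hj : j ≤ o + size l := le_trans h4 hvi
        rw [if_pos hj]
        exact vec_noncross l o i j h1 hc h3 h4
      · by_cases hc2 : i = o + size l + 1
        · rw [if_neg hc, if_pos hc2] at h4
          have hj1 : ¬ j ≤ o + size l := by omega
          have hj2 : j ≠ o + size l + 1 := by omega
          rw [if_neg hc, if_pos hc2, if_neg hj1, if_neg hj2]
          exact vec_le r (o + size l + 1) j (by omega) (by omega)
        · have hi1 : ¬ i ≤ o + size l := hc
          rw [if_neg hi1, if_neg hc2] at h4 ⊢
          have hj1 : ¬ j ≤ o + size l := by omega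
          have hj2 : j ≠ o + size l + 1 := by omega
          rw [if_neg hj1, if_neg hj2]
          exact vec_noncross r (o + size l + 1) i j (by omega)
            (by simp [size] at h2; omega) h3 h4

end BTree

namespace BTree

lemma rootIdx_ex (g : ℕ → ℕ) (o m : ℕ) (h : o < m) :
    ∃ k, g (o + 1 + k) = m ∨ m ≤ o + 1 + k :=
  ⟨m - o - 1, Or.inr (by omega)⟩

/-- Index of the root of the tree built from vector `g` on interval `(o, m]`. -/
def rootIdx (g : ℕ → ℕ) (o m : ℕ) : ℕ :=
  if h : o < m then o + 1 + Nat.find (rootIdx_ex g o m h) else m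

lemma rootIdx_gt (g : ℕ → ℕ) (o m : ℕ) (h : o < m) : o < rootIdx g o m := by
  rw [rootIdx, dif_pos h]; omega

lemma rootIdx_le (g : ℕ → ℕ) (o m : ℕ) (h : o < m) : rootIdx g o m ≤ m := by
  rw [rootIdx, dif_pos h]
  have := Nat.find_min' (rootIdx_ex g o m h) (m := m - o - 1) (Or.inr (by omega))
  omega

lemma rootIdx_spec (g : ℕ → ℕ) (o m : ℕ) (h : o < m)
    (hval : ∀ i, o < i → i ≤ m → i ≤ g i ∧ g i ≤ m) :
    g (rootIdx g o m) = m ∧ ∀ i, o < i → i < rootIdx g o m → g i < m := by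
  rw [rootIdx, dif_pos h]
  set k := Nat.find (rootIdx_ex g o m h) with hk
  have hfind := Nat.find_spec (rootIdx_ex g o m h)
  rw [← hk] at hfind
  have hle : o + 1 + k ≤ m := by
    have := Nat.find_min' (rootIdx_ex g o m h) (m := m - o - 1) (Or.inr (by omega))
    omega
  constructor
  · rcases hfind with h1 | h1
    · exact h1
    · have hmeq : o + 1 + k = m := by omega
      rw [hmeq]
      have := hval m h le_rfl
      omega
  · intro i hi1 hi2
    have hlt : i - (o + 1) < k := by omega
    have hnp := Nat.find_min (rootIdx_ex g o m h) hlt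
    simp only [not_or, not_le] at hnp
    have heq : o + 1 + (i - (o + 1)) = i := by omega
    rw [heq] at hnp
    have := hval i hi1 (by omega)
    omega

/-- Build a binary tree on interval `(o, m]` from a bracket vector `g`. -/
def build (g : ℕ → ℕ) (o m : ℕ) : BTree :=
  if h : m ≤ o then leaf
  else node (build g o (rootIdx g o m - 1)) (build g (rootIdx g o m) m)
termination_by m - o
decreasing_by
  all_goals
    have h1 : o < rootIdx g o m := rootIdx_gt g o m (by omega)
    have h2 : rootIdx g o m ≤ m := rootIdx_le g o m (by omega)
    omega

lemma build_spec (g : ℕ → ℕ) (o m : ℕ) (hom : o ≤ m)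
    (hval : ∀ i, o < i → i ≤ m → i ≤ g i ∧ g i ≤ m)
    (hnc : ∀ i j, o < i → i < j → j ≤ g i → j ≤ m → g j ≤ g i) :
    size (build g o m) = m - o ∧
    bracket (build g o m) o =
      {p : ℕ × ℕ | o < p.1 ∧ p.1 ≤ m ∧ p.1 < p.2 ∧ p.2 ≤ g p.1} := by
  by_cases h : m ≤ o
  · rw [build, dif_pos h]
    constructor
    · simp [size]; omega
    · ext ⟨i, j⟩; simp [bracket]; omega
  · rw [build, dif_neg h]
    have hom' : o < m := by omega
    have hr1 := rootIdx_gt g o m hom'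
    have hr2 := rootIdx_le g o m hom'
    obtain ⟨hgr, hmin⟩ := rootIdx_spec g o m hom' hval
    generalize hrr : rootIdx g o m = r at hr1 hr2 hgr hmin ⊢
    -- validity on left interval (o, r-1]
    have hvalL : ∀ i, o < i → i ≤ r - 1 → i ≤ g i ∧ g i ≤ r - 1 := by
      intro i hi1 hi2
      have hv := hval i hi1 (by omega)
      refine ⟨hv.1, ?_⟩
      by_contra hcon
      push_neg at hcon
      have hrle : r ≤ g i := by omega
      have := hnc i r hi1 (by omega) hrle hr2
      have := hmin i hi1 (by omega)
      omega
    have hncL : ∀ i j, o < i → i < j → j ≤ g i → j ≤ r - 1 → g j ≤ g i := by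
      intro i j h1 h2 h3 h4; exact hnc i j h1 h2 h3 (by omega)
    have hvalR : ∀ i, r < i → i ≤ m → i ≤ g i ∧ g i ≤ m := by
      intro i h1 h2; exact hval i (by omega) h2
    have hncR : ∀ i j, r < i → i < j → j ≤ g i → j ≤ m → g j ≤ g i := by
      intro i j h1 h2 h3 h4; exact hnc i j (by omega) h2 h3 h4
    obtain ⟨hsL, hbL⟩ := build_spec g o (r - 1) (by omega) hvalL hncL
    obtain ⟨hsR, hbR⟩ := build_spec g r m (by omega) hvalR hncR
    have hoff : o + size (build g o (r - 1)) + 1 = r := by omega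
    constructor
    · simp [size]; omega
    · ext ⟨i, j⟩
      simp only [bracket, Set.mem_union, Set.mem_setOf_eq, hoff, hbL, hbR, hsR]
      constructor
      · rintro ((⟨h1, h2, h3, h4⟩ | ⟨h1, h2, h3, h4⟩) | ⟨h1, h2, h3⟩)
        · exact ⟨h1, by omega, h3, h4⟩
        · exact ⟨by omega, h2, h3, h4⟩
        · subst h1; exact ⟨by omega, by omega, h2, by omega⟩
      · rintro ⟨h1, h2, h3, h4⟩
        rcases lt_trichotomy i r with hc | hc | hc
        · exact Or.inl (Or.inl ⟨h1, by omega, h3, h4⟩)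
        · subst hc; exact Or.inr ⟨rfl, h3, by omega⟩
        · exact Or.inl (Or.inr ⟨hc, by omega, h3, h4⟩)
termination_by m - o
decreasing_by all_goals omega



/-- Package: every tree of size `n` has a bracket vector description. -/
lemma exists_vec (T : BTree) (n : ℕ) (hT : size T = n) : ∃ f : ℕ → ℕ,
    bracket T 0 = {p : ℕ × ℕ | 0 < p.1 ∧ p.1 ≤ n ∧ p.1 < p.2 ∧ p.2 ≤ f p.1} ∧
    (∀ i, i ≤ f i) ∧ (∀ i, 0 < i → i ≤ n → f i ≤ n) ∧
    (∀ i j, 0 < i → i ≤ n → i < j → j ≤ f i → f j ≤ f i) := by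
  refine ⟨vec T 0, ?_, fun i => vec_ge T 0 i, ?_, ?_⟩
  · rw [bracket_eq]
    subst hT
    ext ⟨i, j⟩
    simp
  · intro i h1 h2
    have := vec_le T 0 i h1 (by omega)
    omega
  · intro i j h1 h2 h3 h4
    exact vec_noncross T 0 i j h1 (by omega) h3 h4

end BTree


namespace TamariAux

/-- One closure step for the join vector. -/
def stepAt (m : ℕ → ℕ) (i b : ℕ) : ℕ := max b ((Finset.Ioc i b).sup m)

lemma le_stepAt (m : ℕ → ℕ) (i b : ℕ) : b ≤ stepAt m i b := le_max_left _ _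

lemma stepAt_le {m : ℕ → ℕ} {i b c : ℕ} (hb : b ≤ c)
    (hs : ∀ j, i < j → j ≤ b → m j ≤ c) : stepAt m i b ≤ c := by
  refine max_le hb (Finset.sup_le fun j hj => ?_)
  rw [Finset.mem_Ioc] at hj
  exact hs j hj.1 hj.2

lemma le_iter (m : ℕ → ℕ) (i b k : ℕ) : b ≤ (stepAt m i)^[k] b := by
  induction k with
  | zero => simp
  | succ k ih =>
      rw [Function.iterate_succ_apply']
      exact le_trans ih (le_stepAt m i _)

lemma iter_below {m : ℕ → ℕ} {i b c : ℕ} (hb : b ≤ c)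
    (hcl : ∀ j, i < j → j ≤ c → m j ≤ c) (k : ℕ) : (stepAt m i)^[k] b ≤ c := by
  induction k with
  | zero => simpa
  | succ k ih =>
      rw [Function.iterate_succ_apply']
      exact stepAt_le ih (fun j hj1 hj2 => hcl j hj1 (le_trans hj2 ih))

lemma iter_fix {m : ℕ → ℕ} {n i b : ℕ} (hi : 0 < i) (hb : i ≤ b) (hbn : b ≤ n)
    (hcl : ∀ j, i < j → j ≤ n → m j ≤ n) :
    stepAt m i ((stepAt m i)^[n] b) = (stepAt m i)^[n] b := by
  have key : ∀ k, stepAt m i ((stepAt m i)^[k] b) = (stepAt m i)^[k] b ∨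
      b + k ≤ (stepAt m i)^[k] b := by
    intro k
    induction k with
    | zero => right; simp
    | succ k ih =>
        rcases ih with hfix | hge
        · left
          rw [Function.iterate_succ_apply', hfix, hfix]
        · rcases eq_or_lt_of_le (le_stepAt m i ((stepAt m i)^[k] b)) with heq | hlt
          · left
            rw [Function.iterate_succ_apply', ← heq, ← heq]
          · right
            rw [Function.iterate_succ_apply']
            omega
  rcases key n with hfix | hge
  · exact hfix
  · exfalso
    have : (stepAt m i)^[n] b ≤ n := iter_below hbn hcl n
    omega

lemma fix_mem_le {m : ℕ → ℕ} {i F j : ℕ} (hfix : stepAt m i F = F)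
    (hj1 : i < j) (hj2 : j ≤ F) : m j ≤ F := by
  calc m j ≤ (Finset.Ioc i F).sup m := Finset.le_sup (Finset.mem_Ioc.mpr ⟨hj1, hj2⟩)
    _ ≤ stepAt m i F := le_max_right _ _
    _ = F := hfix

end TamariAux

open BTree TamariAux in
/-- In the Tamari (rotation) order on binary trees with `n` nodes — given by containment
of bracket sets — the meet of any two trees `T, T'` exists and its bracket components
satisfy `B(T ∧ T')_i = B(T)_i ∩ B(T')_i`; moreover any two trees also have a join, so
the rotation order on binary trees is a lattice. -/
theorem tamari_meet_lattice (n : ℕ) (T T' : BTree) (hT : T.size = n) (hT' : T'.size = n) :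
    (∃ M : BTree, M.size = n ∧
      (∀ i : ℕ, comp (BTree.bracket M 0) i = comp (BTree.bracket T 0) i ∩ comp (BTree.bracket T' 0) i) ∧
      BTree.bracket M 0 ⊆ BTree.bracket T 0 ∧ BTree.bracket M 0 ⊆ BTree.bracket T' 0 ∧
      (∀ S : BTree, S.size = n → BTree.bracket S 0 ⊆ BTree.bracket T 0 →
        BTree.bracket S 0 ⊆ BTree.bracket T' 0 → BTree.bracket S 0 ⊆ BTree.bracket M 0)) ∧
    (∃ J : BTree, J.size = n ∧
      BTree.bracket T 0 ⊆ BTree.bracket J 0 ∧ BTree.bracket T' 0 ⊆ BTree.bracket J 0 ∧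
      (∀ S : BTree, S.size = n → BTree.bracket T 0 ⊆ BTree.bracket S 0 →
        BTree.bracket T' 0 ⊆ BTree.bracket S 0 → BTree.bracket J 0 ⊆ BTree.bracket S 0)) := by
  obtain ⟨f, hbT, hf_ge, hf_le, hf_nc⟩ := exists_vec T n hT
  obtain ⟨f', hbT', hf'_ge, hf'_le, hf'_nc⟩ := exists_vec T' n hT'
  constructor
  · -- MEET
    obtain ⟨g, hg⟩ : ∃ g : ℕ → ℕ, ∀ i, g i = min (f i) (f' i) := ⟨_, fun _ => rfl⟩
    have hval : ∀ i, 0 < i → i ≤ n → i ≤ g i ∧ g i ≤ n := by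
      intro i h1 h2
      have := hf_ge i; have := hf'_ge i; have := hf_le i h1 h2
      rw [hg]; omega
    have hnc : ∀ i j, 0 < i → i < j → j ≤ g i → j ≤ n → g j ≤ g i := by
      intro i j h1 h2 h3 h4
      rw [hg] at h3
      have h5 : f j ≤ f i := hf_nc i j h1 (by omega) h2 (by omega)
      have h6 : f' j ≤ f' i := hf'_nc i j h1 (by omega) h2 (by omega)
      rw [hg, hg]; omega
    obtain ⟨hsM, hbM⟩ := build_spec g 0 n (Nat.zero_le n)
      (by intro i h1 h2; exact hval i h1 h2)
      (by intro i j h1 h2 h3 h4; exact hnc i j (by omega) h2 h3 h4)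
    refine ⟨build g 0 n, by omega, ?_, ?_, ?_, ?_⟩
    · intro i
      ext j
      simp only [comp, Set.mem_setOf_eq, Set.mem_inter_iff, hbM, hbT, hbT']
      rw [hg]; omega
    · intro ⟨i, j⟩ hij
      rw [hbM] at hij; rw [hbT]
      simp only [Set.mem_setOf_eq] at hij ⊢
      rw [hg] at hij; omega
    · intro ⟨i, j⟩ hij
      rw [hbM] at hij; rw [hbT']
      simp only [Set.mem_setOf_eq] at hij ⊢
      rw [hg] at hij; omega
    · intro S hS hS1 hS2 ⟨i, j⟩ hij
      have h1 := hS1 hij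
      have h2 := hS2 hij
      rw [hbT] at h1; rw [hbT'] at h2; rw [hbM]
      simp only [Set.mem_setOf_eq] at h1 h2 ⊢
      rw [hg]; omega
  · -- JOIN
    obtain ⟨mx, hmx⟩ : ∃ mx : ℕ → ℕ, ∀ i, mx i = max (f i) (f' i) := ⟨_, fun _ => rfl⟩
    have hmx_le : ∀ j, 0 < j → j ≤ n → mx j ≤ n := by
      intro j h1 h2
      have := hf_le j h1 h2; have := hf'_le j h1 h2
      rw [hmx]; omega
    have hmx_ge : ∀ i, i ≤ mx i := by
      intro i; have := hf_ge i; rw [hmx]; omega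
    obtain ⟨h, hh⟩ : ∃ h : ℕ → ℕ, ∀ i, h i = (stepAt mx i)^[n] (mx i) := ⟨_, fun _ => rfl⟩
    have hcln : ∀ i : ℕ, ∀ j, i < j → j ≤ n → mx j ≤ n := by
      intro i j h1 h2; exact hmx_le j (by omega) h2
    have hh_ge : ∀ i, mx i ≤ h i := by
      intro i; rw [hh]; exact le_iter mx i (mx i) n
    have hh_le : ∀ i, 0 < i → i ≤ n → h i ≤ n := by
      intro i h1 h2; rw [hh]
      exact iter_below (hmx_le i h1 h2) (hcln i) n
    have hfix : ∀ i, 0 < i → i ≤ n → stepAt mx i (h i) = h i := by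
      intro i h1 h2; rw [hh]
      exact iter_fix h1 (hmx_ge i) (hmx_le i h1 h2) (hcln i)
    have hval : ∀ i, 0 < i → i ≤ n → i ≤ h i ∧ h i ≤ n := by
      intro i h1 h2
      exact ⟨le_trans (hmx_ge i) (hh_ge i), hh_le i h1 h2⟩
    have hnc : ∀ i j, 0 < i → i < j → j ≤ h i → j ≤ n → h j ≤ h i := by
      intro i j h1 h2 h3 h4
      have hin : i ≤ n := by omega
      have hmxj : mx j ≤ h i := fix_mem_le (hfix i h1 hin) h2 h3
      rw [hh j]
      refine iter_below hmxj ?_ n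
      intro j' hj1 hj2
      exact fix_mem_le (hfix i h1 hin) (by omega) hj2
    obtain ⟨hsJ, hbJ⟩ := build_spec h 0 n (Nat.zero_le n)
      (by intro i h1 h2; exact hval i h1 h2)
      (by intro i j h1 h2 h3 h4; exact hnc i j (by omega) h2 h3 h4)
    refine ⟨build h 0 n, by omega, ?_, ?_, ?_⟩
    · intro ⟨i, j⟩ hij
      rw [hbT] at hij; rw [hbJ]
      simp only [Set.mem_setOf_eq] at hij ⊢
      have h5 : mx i ≤ h i := hh_ge i
      rw [hmx] at h5
      omega
    · intro ⟨i, j⟩ hij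
      rw [hbT'] at hij; rw [hbJ]
      simp only [Set.mem_setOf_eq] at hij ⊢
      have h5 : mx i ≤ h i := hh_ge i
      rw [hmx] at h5
      omega
    · intro S hS hS1 hS2 ⟨i, j⟩ hij
      rw [hbJ] at hij
      simp only [Set.mem_setOf_eq] at hij
      obtain ⟨h1, h2, h3, h4⟩ := hij
      obtain ⟨v, hbS, hv_ge, hv_le, hv_nc⟩ := exists_vec S n hS
      have hmx_le_v : ∀ k, 0 < k → k ≤ n → mx k ≤ v k := by
        intro k hk1 hk2
        have hfv : f k ≤ v k := by
          rcases eq_or_lt_of_le (hf_ge k) with heq | hlt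
          · rw [← heq]; exact hv_ge k
          · have hmem : ((k, f k) : ℕ × ℕ) ∈ bracket T 0 := by
              rw [hbT]; exact ⟨hk1, hk2, hlt, le_rfl⟩
            have := hS1 hmem
            rw [hbS] at this
            exact this.2.2.2
        have hf'v : f' k ≤ v k := by
          rcases eq_or_lt_of_le (hf'_ge k) with heq | hlt
          · rw [← heq]; exact hv_ge k
          · have hmem : ((k, f' k) : ℕ × ℕ) ∈ bracket T' 0 := by
              rw [hbT']; exact ⟨hk1, hk2, hlt, le_rfl⟩
            have := hS2 hmem
            rw [hbS] at this
            exact this.2.2.2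
        rw [hmx]; omega
      have hhv : h i ≤ v i := by
        rw [hh]
        refine iter_below (hmx_le_v i h1 h2) ?_ n
        intro j' hj1 hj2
        have hj'n : j' ≤ n := le_trans hj2 (hv_le i h1 h2)
        have hvj' : v j' ≤ v i := hv_nc i j' h1 h2 hj1 hj2
        exact le_trans (hmx_le_v j' (by omega) hj'n) hvj'
      rw [hbS]
      exact ⟨h1, h2, h3, le_trans h4 hhv⟩
end

section
/- For any composition s = (s_1,…,s_n), the number of elements of the s-weak order satisfies the identity ∏_{i=1}^{n-1}(1 + s_{n-i+1} + ⋯ + s_n) = Σ_j binom(s_n+1, j_1) binom(s_{n-1}+1, j_2) ⋯ binom(s_2+1, j_{n-1}) · ∏_{i=1}^{n-1}(j_1 + ⋯ + j_i − i + 1), where the sum ranges over weak compositions j = (j_1,…,j_{n-1}) of n−1 with j_1 + ⋯ + j_i ≥ i for all i. -/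
/-!
Put `c i = s (n - i)` and let `A_M(t)` be the sum, over `j ∈ ℕ^M` with `|j| = t`, of
`∏ binom(c_i + 1, j_i) · ∏ (j_1 + ⋯ + j_i - i + 1)`, the subtraction truncated at `0`; the
truncation kills exactly the tuples violating `j_1 + ⋯ + j_i ≥ i`, so the right-hand side of the
theorem is `A_{n-1}(n-1)`. Splitting off the last entry `a` of `j` multiplies the weight by
`binom(c_M + 1, a) · (t - M)`, so `A_{M+1}(t) = (t - M) Σ_a binom(c_M + 1, a) A_M(t - a)`.
With Vandermonde's identity this gives by induction
`A_M(M + u) = ∏_{i<M} (1 + c_0 + ⋯ + c_i) · binom(c_0 + ⋯ + c_{M-1}, u)`,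
and `u = 0` is the left-hand side.
-/

open Finset

namespace SWeakOrder

variable {M N : ℕ}

def partialSum (j : Fin M → Fin N) (k : Fin M) : ℕ :=
  ∑ m ∈ univ.filter (· ≤ k), (j m : ℕ)

def weight (c : ℕ → ℕ) (j : Fin M → Fin N) : ℕ :=
  (∏ i, (c i.val + 1).choose (j i)) * ∏ i, (partialSum j i + 1 - (i + 1))

def weightedCount (N : ℕ) (c : ℕ → ℕ) (M t : ℕ) : ℕ :=
  ∑ j : Fin M → Fin N with ∑ i, (j i : ℕ) = t, weight c j

lemma partialSum_last (j : Fin (M + 1) → Fin N) :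
    partialSum j (Fin.last M) = ∑ i, (j i : ℕ) := by
  rw [partialSum, filter_true_of_mem fun m _ => Fin.le_last m]

lemma partialSum_snoc_castSucc (j : Fin M → Fin N) (a : Fin N) (k : Fin M) :
    partialSum (Fin.snoc j a : Fin (M + 1) → Fin N) k.castSucc = partialSum j k := by
  have hfilter : univ.filter (fun m : Fin (M + 1) => m ≤ k.castSucc) =
      (univ.filter fun m : Fin M => m ≤ k).map Fin.castSuccEmb := by
    ext x
    induction x using Fin.lastCases <;> simp
  simp [partialSum, hfilter]

lemma sum_snoc (j : Fin M → Fin N) (a : Fin N) :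
    ∑ i, ((Fin.snoc j a : Fin (M + 1) → Fin N) i : ℕ) = ∑ i, (j i : ℕ) + a := by
  simp [Fin.sum_univ_castSucc]

lemma weight_snoc (c : ℕ → ℕ) (j : Fin M → Fin N) (a : Fin N) :
    weight c (Fin.snoc j a : Fin (M + 1) → Fin N) =
      weight c j * (c M + 1).choose a * (∑ i, (j i : ℕ) + a - M) := by
  simp only [weight, Fin.prod_univ_castSucc, Fin.snoc_castSucc, Fin.snoc_last,
    partialSum_snoc_castSucc, partialSum_last, sum_snoc, Fin.val_castSucc, Fin.val_last,
    Nat.add_sub_add_right]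
  ring

lemma weight_eq_zero_of_partialSum_le (c : ℕ → ℕ) {j : Fin M → Fin N} {k : Fin M}
    (hk : partialSum j k ≤ k) : weight c j = 0 :=
  mul_eq_zero_of_right _ <| prod_eq_zero (mem_univ k) (by omega)

lemma weightedCount_of_lt (c : ℕ → ℕ) {t : ℕ} (ht : t < M) : weightedCount N c M t = 0 := by
  obtain ⟨M, rfl⟩ := Nat.exists_eq_add_of_lt ht
  refine sum_eq_zero fun j hj => weight_eq_zero_of_partialSum_le c (k := Fin.last _) ?_
  rw [partialSum_last, (mem_filter.1 hj).2, Fin.val_last]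
  omega

lemma weightedCount_succ (c : ℕ → ℕ) {t : ℕ} (ht : t < N) :
    weightedCount N c (M + 1) t =
      (t - M) * ∑ a ∈ range (t + 1), (c M + 1).choose a * weightedCount N c M (t - a) := by
  have hlast : weightedCount N c (M + 1) t = ∑ a : Fin N,
      if (a : ℕ) ≤ t then (t - M) * ((c M + 1).choose a * weightedCount N c M (t - a)) else 0 := by
    rw [weightedCount, sum_filter, ← (Fin.snocEquiv fun _ => Fin N).sum_comp,
      Fintype.sum_prod_type]
    refine sum_congr rfl fun a _ => ?_
    split_ifs with ha
    · rw [weightedCount, sum_filter, mul_sum, mul_sum]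
      refine sum_congr rfl fun j _ => ?_
      simp only [Fin.snocEquiv, Equiv.coe_fn_mk, sum_snoc, weight_snoc]
      split_ifs with h h' h'
      · rw [h]; ring
      all_goals omega
    · refine sum_eq_zero fun j _ => if_neg ?_
      simp only [Fin.snocEquiv, Equiv.coe_fn_mk, sum_snoc]
      omega
  have hrange : (range N).filter (· ≤ t) = range (t + 1) := by
    ext a
    simp only [mem_filter, mem_range]
    omega
  rw [hlast, Fin.sum_univ_eq_sum_range (fun a =>
      if a ≤ t then (t - M) * ((c M + 1).choose a * weightedCount N c M (t - a)) else 0),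
    ← sum_filter, hrange, mul_sum]

lemma weightedCount_add (c : ℕ → ℕ) {u : ℕ} (h : M + u < N) :
    weightedCount N c M (M + u) =
      (∏ i ∈ range M, (1 + ∑ k ∈ range (i + 1), c k)) * (∑ k ∈ range M, c k).choose u := by
  induction M generalizing u with
  | zero =>
    rw [weightedCount, sum_filter, Fintype.sum_unique]
    cases u <;> simp [weight]
  | succ M ih =>
    set P := ∏ i ∈ range M, (1 + ∑ k ∈ range (i + 1), c k) with hP
    set S := ∑ k ∈ range M, c k with hS
    -- in `weightedCount_succ` at `t = M + 1 + u`, only `a ≤ u + 1` leave `t - a ≥ M`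
    have hlow : ∑ a ∈ range (u + 2), (c M + 1).choose a * weightedCount N c M (M + 1 + u - a) =
        P * (c M + 1 + S).choose (u + 1) := by
      rw [Nat.add_choose_eq, Finset.Nat.sum_antidiagonal_eq_sum_range_succ
        (fun a b => (c M + 1).choose a * S.choose b), mul_sum]
      refine sum_congr rfl fun a ha => ?_
      rw [mem_range] at ha
      rw [show M + 1 + u - a = M + (u + 1 - a) by omega, ih (by omega)]
      ring
    have hhigh : ∑ a ∈ range M, (c M + 1).choose (u + 2 + a) *
        weightedCount N c M (M + 1 + u - (u + 2 + a)) = 0 :=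
      sum_eq_zero fun a ha => by
        rw [mem_range] at ha
        rw [weightedCount_of_lt c (by omega), mul_zero]
    rw [weightedCount_succ c h, show M + 1 + u + 1 = u + 2 + M by ring, sum_range_add, hlow,
      hhigh, add_zero, show M + 1 + u - M = u + 1 by omega, prod_range_succ, sum_range_succ, ← hP,
      ← hS, show c M + 1 + S = S + c M + 1 by ring]
    calc (u + 1) * (P * (S + c M + 1).choose (u + 1))
        = P * ((S + c M + 1).choose (u + 1) * (u + 1)) := by ring
      _ = P * (1 + (S + c M)) * (S + c M).choose u := by
        rw [← Nat.add_one_mul_choose_eq]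
        ring

lemma sum_Icc_eq_sum_range_sub {β : Type*} [AddCommMonoid β] (f : ℕ → β) {n i : ℕ} (h : i ≤ n) :
    ∑ r ∈ Icc (n - i + 1) n, f r = ∑ k ∈ range i, f (n - k) := by
  refine sum_nbij' (fun r => n - r) (fun k => n - k) ?_ ?_ ?_ ?_ fun r hr => ?_
  all_goals simp only [mem_Icc, mem_range] at *
  · intro r hr; omega
  · intro k hk; omega
  · intro r hr; omega
  · intro k hk; omega
  · rw [Nat.sub_sub_self (by omega)]

end SWeakOrder

open SWeakOrder in
theorem s_weak_order_count_identity_general (n : ℕ) (s : ℕ → ℕ) :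
    ∏ i ∈ Finset.Icc 1 (n - 1), (1 + ∑ r ∈ Finset.Icc (n - i + 1) n, s r) =
      ∑ j ∈ Finset.univ.filter (fun j : Fin (n - 1) → Fin n =>
          (∑ i, (j i : ℕ)) = n - 1 ∧
          ∀ k : Fin (n - 1), k.val + 1 ≤ ∑ i ∈ Finset.univ.filter (· ≤ k), (j i : ℕ)),
        (∏ i : Fin (n - 1), Nat.choose (s (n - i.val) + 1) (j i)) *
          ∏ i : Fin (n - 1),
            ((∑ m ∈ Finset.univ.filter (· ≤ i), (j m : ℕ)) + 1 - (i.val + 1)) := by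
  rcases Nat.eq_zero_or_pos n with rfl | hn
  · simp
  calc ∏ i ∈ Icc 1 (n - 1), (1 + ∑ r ∈ Icc (n - i + 1) n, s r)
      = ∏ i ∈ range (n - 1), (1 + ∑ k ∈ range (i + 1), s (n - k)) := by
        rw [← Ico_add_one_right_eq_Icc, prod_Ico_eq_prod_range, Nat.add_sub_cancel]
        refine prod_congr rfl fun i hi => ?_
        rw [mem_range] at hi
        rw [sum_Icc_eq_sum_range_sub s (by omega), add_comm 1 i]
    _ = weightedCount n (fun i => s (n - i)) (n - 1) (n - 1) := by
        simpa using (weightedCount_add (fun i => s (n - i)) (M := n - 1) (u := 0) (by omega)).symm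
    _ = _ := by
        rw [← filter_filter]
        refine (sum_filter_of_ne fun j _ hj k => ?_).symm
        by_contra hk
        exact hj (weight_eq_zero_of_partialSum_le _ (k := k) (by unfold partialSum; omega))

/-- For a composition `s = (s₁,…,sₙ)` of positive integers, the number of elements
of the `s`-weak order satisfies
`∏_{i=1}^{n-1}(1 + s_{n-i+1} + ⋯ + s_n)
  = Σ_j binom(s_n+1, j_1) ⋯ binom(s_2+1, j_{n-1}) · ∏_{i=1}^{n-1}(j_1+⋯+j_i − i + 1)`,
the sum ranging over weak compositions `j = (j_1,…,j_{n-1})` of `n−1` with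
`j_1 + ⋯ + j_i ≥ i` for all `i`.  (Here `j` is encoded as a function
`Fin (n-1) → Fin n`, `j_k = j ⟨k-1⟩`.) -/
theorem s_weak_order_count_identity (n : ℕ) (s : ℕ → ℕ)
    (hs : ∀ i ∈ Finset.Icc 1 n, 1 ≤ s i) :
    ∏ i ∈ Finset.Icc 1 (n - 1), (1 + ∑ r ∈ Finset.Icc (n - i + 1) n, s r) =
      ∑ j ∈ Finset.univ.filter (fun j : Fin (n - 1) → Fin n =>
          (∑ i, (j i : ℕ)) = n - 1 ∧
          ∀ k : Fin (n - 1), k.val + 1 ≤ ∑ i ∈ Finset.univ.filter (· ≤ k), (j i : ℕ)),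
        (∏ i : Fin (n - 1), Nat.choose (s (n - i.val) + 1) (j i)) *
          ∏ i : Fin (n - 1),
            ((∑ m ∈ Finset.univ.filter (· ≤ i), (j m : ℕ)) + 1 - (i.val + 1)) :=
  s_weak_order_count_identity_general n s
end

section
/- Let c be a Coxeter element of S_n, and let U_c, D_c be the partition of [2, n−1] where j ∈ U_c if s_j appears before s_{j-1} in c and j ∈ D_c otherwise. Then a permutation π ∈ S_n is c-sortable if and only if π avoids the patterns jki for all j ∈ U_c and kij for all j ∈ D_c. -/
/-- The permutation of `ℕ` given by a word in the adjacent transpositions: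
the letter `m` stands for `s_m = (m, m+1)`. -/
def wordProd (L : List ℕ) : Equiv.Perm ℕ :=
  (L.map (fun m => Equiv.swap m (m + 1))).prod

/-- `L` is a reduced word of `π ∈ S_n`. -/
def IsRWord (n : ℕ) (π : Equiv.Perm ℕ) (L : List ℕ) : Prop :=
  (∀ m ∈ L, m ∈ Finset.Icc 1 (n - 1)) ∧ wordProd L = π ∧
    ∀ L' : List ℕ, (∀ m ∈ L', m ∈ Finset.Icc 1 (n - 1)) → wordProd L' = π →
      L.length ≤ L'.length

/-- `π` is `c`-sortable for the Coxeter element given by the word `c`: the `c`-sorting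
word of `π` (the lexicographically first reduced subword of `c^∞`) factors as
`L₁ L₂ ⋯ L_p` where each `L_i` is a subword of `c` and `L₁ ⊇ L₂ ⊇ ⋯ ⊇ L_p` as sets of
letters; since `c` has no repeated letters this means that `π` admits a reduced word
that is a concatenation of subwords of `c` with weakly decreasing supports. -/
def CSortable (n : ℕ) (c : List ℕ) (π : Equiv.Perm ℕ) : Prop :=
  ∃ F : List (List ℕ), (∀ f ∈ F, f.Sublist c) ∧
    F.Chain' (fun f g => g.Sublist f) ∧ IsRWord n π F.flatten

/-!
We follow Reading's recursion for `c`-sortability. Let `s_m` be the first letter of `c` and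
let `c'` be `c` with `s_m` moved to the end. If `s_m` is a left descent of `π`, then `π` is
`c`-sortable iff `s_m π` is `c'`-sortable: the leading `s_m` of a sorting word is removed and
each later `s_m` moves to the end of the previous factor. Otherwise `π` is `c`-sortable iff it
lies in the parabolic subgroup generated by the `s_i` with `i ≠ m`, i.e. `π` maps `[0, m]` to
itself, and is `c'`-sortable.

The pattern condition obeys the same recursion. Moving `s_m` to the end of `c` only changes its
order relative to `s_{m-1}` and `s_{m+1}`, and multiplying by `s_m` on the left exchanges the
values `m` and `m + 1`, which turns a `jki` at `m` into one at `m + 1` and a `kij` at `m + 1`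
into one at `m`. In the ascent case, a value crossing `m` produces a `jki` at `m` or a `kij`
at `m + 1`. The recursion terminates: the length of `π` drops in the descent case, and
otherwise the position in `c` of the first left descent of `π` drops.

Lengths are computed as numbers of inversions, so that a word is reduced iff its length is
the number of inversions of its product.
-/

open Equiv Finset
open scoped List

@[simp] lemma wordProd_nil : wordProd [] = 1 := rfl

@[simp] lemma wordProd_cons (a : ℕ) (L : List ℕ) :
    wordProd (a :: L) = swap a (a + 1) * wordProd L := by
  simp [wordProd]

@[simp] lemma wordProd_append (L₁ L₂ : List ℕ) :
    wordProd (L₁ ++ L₂) = wordProd L₁ * wordProd L₂ := by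
  simp [wordProd]

def SupportedIn (n : ℕ) (σ : Perm ℕ) : Prop := ∀ x : ℕ, x ∉ Icc 1 n → σ x = x

section Support

variable {n : ℕ} {σ τ : Perm ℕ}

lemma SupportedIn.apply_mem (h : SupportedIn n σ) {x : ℕ} (hx : x ∈ Icc 1 n) :
    σ x ∈ Icc 1 n := by
  by_contra hc
  rw [σ.injective (h _ hc)] at hc
  exact hc hx

lemma SupportedIn.inv (h : SupportedIn n σ) : SupportedIn n σ⁻¹ := fun x hx => by
  conv_lhs => rw [← h x hx]
  simp

lemma SupportedIn.mul (hσ : SupportedIn n σ) (hτ : SupportedIn n τ) :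
    SupportedIn n (σ * τ) := fun x hx => by
  simp [hτ x hx, hσ x hx]

lemma supportedIn_swap {m : ℕ} (hm : m ∈ Icc 1 (n - 1)) : SupportedIn n (swap m (m + 1)) :=
  fun x hx => by
    simp only [mem_Icc] at hm hx
    exact swap_apply_of_ne_of_ne (by omega) (by omega)

lemma supportedIn_wordProd {L : List ℕ} (h : ∀ m ∈ L, m ∈ Icc 1 (n - 1)) :
    SupportedIn n (wordProd L) := by
  induction L with
  | nil => exact fun _ _ => rfl
  | cons a L ih =>
    rw [wordProd_cons]
    exact (supportedIn_swap (h a List.mem_cons_self)).mul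
      (ih fun m hm => h m (List.mem_cons_of_mem a hm))

lemma SupportedIn.apply_bounds (h : SupportedIn n σ) {x : ℕ} (h1 : 1 ≤ x) (h2 : x ≤ n) :
    1 ≤ σ x ∧ σ x ≤ n := by
  simpa using h.apply_mem (x := x) (by simp; omega)

lemma SupportedIn.eq_one_of_forall_lt (h : SupportedIn n σ)
    (hasc : ∀ j ∈ Icc 1 (n - 1), σ j < σ (j + 1)) : σ = 1 := by
  have hmono : StrictMono σ := strictMono_nat_of_lt_succ fun x => by
    have : 1 ≤ x ∧ x ≤ n → 1 ≤ σ x ∧ σ x ≤ n := fun hx => h.apply_bounds hx.1 hx.2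
    have : 1 ≤ x + 1 ∧ x + 1 ≤ n → 1 ≤ σ (x + 1) ∧ σ (x + 1) ≤ n :=
      fun hx => h.apply_bounds hx.1 hx.2
    have : ¬(1 ≤ x ∧ x ≤ n) → σ x = x := fun hx => h x (by simpa using hx)
    have : ¬(1 ≤ x + 1 ∧ x + 1 ≤ n) → σ (x + 1) = x + 1 := fun hx => h _ (by simpa using hx)
    by_cases hx : 1 ≤ x ∧ x + 1 ≤ n
    · exact hasc x (by simp only [mem_Icc]; omega)
    · omega
  have := Subsingleton.elim (hmono.orderIsoOfSurjective σ σ.surjective) (OrderIso.refl ℕ)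
  ext x
  exact DFunLike.congr_fun this x

lemma SupportedIn.exists_descent (h : SupportedIn n σ) (hσ : σ ≠ 1) :
    ∃ j ∈ Icc 1 (n - 1), σ (j + 1) < σ j := by
  by_contra! hno
  exact hσ (h.eq_one_of_forall_lt fun j hj =>
    (hno j hj).lt_of_ne fun he => by have := σ.injective he; omega)

end Support

/-- Inversions of `σ` recorded by values: pairs `u < v` in `[1, n]` with `v` to the left
of `u` in the one-line notation of `σ`. -/
def inversions (n : ℕ) (σ : Perm ℕ) : Finset (ℕ × ℕ) :=
  (Icc 1 n ×ˢ Icc 1 n).filter fun x => x.1 < x.2 ∧ σ⁻¹ x.2 < σ⁻¹ x.1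

def numInversions (n : ℕ) (σ : Perm ℕ) : ℕ := (inversions n σ).card

section Inversions

variable {n j : ℕ} {σ : Perm ℕ}

lemma mem_inversions {u v : ℕ} :
    (u, v) ∈ inversions n σ ↔ (u ∈ Icc 1 n ∧ v ∈ Icc 1 n) ∧ u < v ∧ σ⁻¹ v < σ⁻¹ u := by
  simp [inversions]

@[simp] lemma numInversions_one : numInversions n 1 = 0 := by
  simp only [numInversions, card_eq_zero, inversions, filter_eq_empty_iff]
  intro x _
  simp only [inv_one, Perm.one_apply]
  omega

lemma inversions_mul_swap (hσ : SupportedIn n σ) (hj : j ∈ Icc 1 (n - 1))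
    (hlt : σ j < σ (j + 1)) :
    inversions n (σ * swap j (j + 1)) = insert (σ j, σ (j + 1)) (inversions n σ) := by
  have hj' : j ∈ Icc 1 n ∧ j + 1 ∈ Icc 1 n := by simp only [mem_Icc] at hj ⊢; omega
  have := hσ.apply_mem hj'.1
  have := hσ.apply_mem hj'.2
  ext ⟨u, v⟩
  obtain ⟨a, rfl⟩ := σ.surjective u
  obtain ⟨b, rfl⟩ := σ.surjective v
  simp only [mem_insert, mem_inversions, Prod.mk.injEq, mul_inv_rev, swap_inv, Perm.mul_apply,
    Perm.coe_inv, symm_apply_apply, σ.injective.eq_iff, swap_apply_def, mem_Icc] at *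
  split_ifs <;> subst_vars <;> omega

lemma numInversions_mul_swap_of_lt (hσ : SupportedIn n σ) (hj : j ∈ Icc 1 (n - 1))
    (hlt : σ j < σ (j + 1)) :
    numInversions n (σ * swap j (j + 1)) = numInversions n σ + 1 := by
  rw [numInversions, inversions_mul_swap hσ hj hlt, card_insert_of_notMem]
  · rfl
  · simp [mem_inversions]

lemma numInversions_mul_swap_of_gt (hσ : SupportedIn n σ) (hj : j ∈ Icc 1 (n - 1))
    (hgt : σ (j + 1) < σ j) :
    numInversions n (σ * swap j (j + 1)) + 1 = numInversions n σ := by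
  have h := numInversions_mul_swap_of_lt (hσ.mul (supportedIn_swap hj)) hj (by simpa using hgt)
  rwa [mul_assoc, swap_mul_self, mul_one, eq_comm] at h

lemma numInversions_inv (hσ : SupportedIn n σ) : numInversions n σ⁻¹ = numInversions n σ := by
  refine card_bij' (fun x _ => (σ x.2, σ x.1)) (fun x _ => (σ⁻¹ x.2, σ⁻¹ x.1)) ?_ ?_ ?_ ?_
  · rintro ⟨u, v⟩ h
    obtain ⟨⟨hu, hv⟩, huv, hlt⟩ := mem_inversions.1 h
    simp only [inv_inv] at hlt
    exact mem_inversions.2 ⟨⟨hσ.apply_mem hv, hσ.apply_mem hu⟩, hlt, by simpa using huv⟩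
  · rintro ⟨u, v⟩ h
    obtain ⟨⟨hu, hv⟩, huv, hlt⟩ := mem_inversions.1 h
    exact mem_inversions.2 ⟨⟨hσ.inv.apply_mem hv, hσ.inv.apply_mem hu⟩, hlt, by simpa using huv⟩
  · simp
  · simp

lemma numInversions_swap_mul_of_lt (hσ : SupportedIn n σ) (hj : j ∈ Icc 1 (n - 1))
    (hlt : σ⁻¹ j < σ⁻¹ (j + 1)) :
    numInversions n (swap j (j + 1) * σ) = numInversions n σ + 1 := by
  have h : swap j (j + 1) * σ = (σ⁻¹ * swap j (j + 1))⁻¹ := by simp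
  rw [h, numInversions_inv (hσ.inv.mul (supportedIn_swap hj)),
    numInversions_mul_swap_of_lt hσ.inv hj hlt, numInversions_inv hσ]

lemma numInversions_swap_mul_of_gt (hσ : SupportedIn n σ) (hj : j ∈ Icc 1 (n - 1))
    (hgt : σ⁻¹ (j + 1) < σ⁻¹ j) :
    numInversions n (swap j (j + 1) * σ) + 1 = numInversions n σ := by
  have h : swap j (j + 1) * σ = (σ⁻¹ * swap j (j + 1))⁻¹ := by simp
  rw [h, numInversions_inv (hσ.inv.mul (supportedIn_swap hj)),
    numInversions_mul_swap_of_gt hσ.inv hj hgt, numInversions_inv hσ]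

lemma numInversions_wordProd_le {L : List ℕ} (h : ∀ m ∈ L, m ∈ Icc 1 (n - 1)) :
    numInversions n (wordProd L) ≤ L.length := by
  induction L with
  | nil => simp
  | cons a L ih =>
    have ha := h a List.mem_cons_self
    have hL : ∀ m ∈ L, m ∈ Icc 1 (n - 1) := fun m hm => h m (List.mem_cons_of_mem a hm)
    have hσ := supportedIn_wordProd hL
    have hne : (wordProd L)⁻¹ a ≠ (wordProd L)⁻¹ (a + 1) := by simp
    have := ih hL
    rw [wordProd_cons, List.length_cons]
    rcases hne.lt_or_gt with hlt | hgt
    · rw [numInversions_swap_mul_of_lt hσ ha hlt]; omega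
    · have := numInversions_swap_mul_of_gt hσ ha hgt; omega

lemma SupportedIn.eq_one_of_numInversions_eq_zero (hσ : SupportedIn n σ)
    (h : numInversions n σ = 0) : σ = 1 := by
  by_contra hne
  obtain ⟨j, hj, hgt⟩ := hσ.exists_descent hne
  have := numInversions_mul_swap_of_gt hσ hj hgt
  omega

lemma SupportedIn.exists_word (hσ : SupportedIn n σ) :
    ∃ L : List ℕ, (∀ m ∈ L, m ∈ Icc 1 (n - 1)) ∧ wordProd L = σ ∧
      L.length = numInversions n σ := by
  induction hk : numInversions n σ generalizing σ with
  | zero => exact ⟨[], by simp, (hσ.eq_one_of_numInversions_eq_zero hk).symm, rfl⟩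
  | succ k ih =>
    have hne : σ ≠ 1 := by rintro rfl; simp at hk
    obtain ⟨j, hj, hgt⟩ := hσ.exists_descent hne
    have hk' := numInversions_mul_swap_of_gt hσ hj hgt
    obtain ⟨L, hL, hprod, hlen⟩ := ih (hσ.mul (supportedIn_swap hj)) (by omega)
    refine ⟨L ++ [j], ?_, ?_, ?_⟩
    · simp only [List.mem_append, List.mem_singleton]
      rintro m (hm | rfl)
      exacts [hL m hm, hj]
    · simp [hprod, mul_assoc]
    · simp [hlen]

end Inversions

section ReducedWords

variable {n m j : ℕ} {π : Perm ℕ} {L : List ℕ}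

lemma isRWord_iff : IsRWord n π L ↔
    (∀ a ∈ L, a ∈ Icc 1 (n - 1)) ∧ wordProd L = π ∧ L.length = numInversions n π := by
  constructor
  · rintro ⟨hL, rfl, hmin⟩
    obtain ⟨L', hL', hprod, hlen⟩ := (supportedIn_wordProd hL).exists_word
    exact ⟨hL, rfl, le_antisymm (hlen ▸ hmin L' hL' hprod) (numInversions_wordProd_le hL)⟩
  · rintro ⟨hL, rfl, hlen⟩
    exact ⟨hL, rfl, fun L' hL' hprod => hlen ▸ hprod ▸ numInversions_wordProd_le hL'⟩

lemma IsRWord.supportedIn (h : IsRWord n π L) : SupportedIn n π :=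
  h.2.1 ▸ supportedIn_wordProd h.1

lemma isRWord_cons_iff (hm : m ∈ Icc 1 (n - 1)) (hπ : SupportedIn n π)
    (hd : π⁻¹ (m + 1) < π⁻¹ m) :
    IsRWord n π (m :: L) ↔ IsRWord n (swap m (m + 1) * π) L := by
  have hlen := numInversions_swap_mul_of_gt hπ hm hd
  have hprod : swap m (m + 1) * wordProd L = π ↔ wordProd L = swap m (m + 1) * π := by
    rw [← swap_inv, eq_inv_mul_iff_mul_eq, swap_inv]
  simp only [isRWord_iff, List.forall_mem_cons, wordProd_cons, List.length_cons, hprod]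
  constructor
  · rintro ⟨⟨-, hL⟩, hprod, hl⟩
    exact ⟨hL, hprod, by omega⟩
  · rintro ⟨hL, hprod, hl⟩
    exact ⟨⟨hm, hL⟩, hprod, by omega⟩

lemma IsRWord.inv_lt_of_cons (h : IsRWord n π (m :: L)) : π⁻¹ (m + 1) < π⁻¹ m := by
  have hπ := h.supportedIn
  obtain ⟨hL, rfl, hlen⟩ := isRWord_iff.1 h
  have hm := hL m List.mem_cons_self
  by_contra! hle
  have hup := numInversions_swap_mul_of_lt hπ hm (hle.lt_of_ne (by simp))
  have hle' := numInversions_wordProd_le fun a ha => hL a (List.mem_cons_of_mem m ha)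
  rw [show swap m (m + 1) * wordProd (m :: L) = wordProd L by simp [← mul_assoc]] at hup
  simp only [List.length_cons] at hlen
  omega

lemma IsRWord.of_concat (h : IsRWord n π (L ++ [j])) :
    IsRWord n (wordProd L) L ∧ wordProd L j < wordProd L (j + 1) := by
  obtain ⟨hL, rfl, hlen⟩ := isRWord_iff.1 h
  have hj := hL j (by simp)
  have hL' : ∀ a ∈ L, a ∈ Icc 1 (n - 1) := fun a ha => hL a (by simp [ha])
  have hσ := supportedIn_wordProd hL'
  have hle := numInversions_wordProd_le hL'
  simp only [wordProd_append, wordProd_cons, wordProd_nil, mul_one, List.length_append,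
    List.length_singleton] at hlen
  have hlt : wordProd L j < wordProd L (j + 1) := by
    by_contra! hge
    have := numInversions_mul_swap_of_gt hσ hj (hge.lt_of_ne (by simp))
    omega
  have := numInversions_mul_swap_of_lt hσ hj hlt
  exact ⟨isRWord_iff.2 ⟨hL', rfl, by omega⟩, hlt⟩

end ReducedWords

section Parabolic

variable {n m : ℕ} {π : Perm ℕ}

lemma mapsTo_wordProd_of_not_mem {L : List ℕ} (h : m ∉ L) :
    Set.MapsTo (wordProd L) (Set.Iic m) (Set.Iic m) := by
  induction L with
  | nil => exact Set.mapsTo_id _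
  | cons a L ih =>
    have ha : a ≠ m := fun he => h (he ▸ List.mem_cons_self)
    have hswap : Set.MapsTo (swap a (a + 1)) (Set.Iic m) (Set.Iic m) := fun x hx => by
      simp only [Set.mem_Iic, swap_apply_def] at hx ⊢
      split_ifs <;> omega
    rw [wordProd_cons, Perm.coe_mul]
    exact hswap.comp (ih fun hm => h (List.mem_cons_of_mem a hm))

lemma apply_le_iff_of_mapsTo (h : Set.MapsTo π (Set.Iic m) (Set.Iic m)) {x : ℕ} :
    π x ≤ m ↔ x ≤ m :=
  ⟨fun hx => by simpa using π.perm_symm_mapsTo_of_mapsTo h (Set.mem_Iic.2 hx), fun hx => h hx⟩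

lemma inv_apply_le_iff_of_mapsTo (h : Set.MapsTo π (Set.Iic m) (Set.Iic m)) {x : ℕ} :
    π⁻¹ x ≤ m ↔ x ≤ m := by
  rw [← apply_le_iff_of_mapsTo h, Perm.coe_inv, apply_symm_apply]

lemma IsRWord.exists_inversion_of_mem {L : List ℕ} (h : IsRWord n π L) (hm : m ∈ L) :
    ∃ u ≤ m, ∃ v, m < v ∧ (u, v) ∈ inversions n π := by
  induction L using List.reverseRecOn generalizing π with
  | nil => simp at hm
  | append_singleton L j ih =>
    obtain ⟨hred, hlt⟩ := h.of_concat
    obtain ⟨hL, rfl, -⟩ := isRWord_iff.1 h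
    have hinv : inversions n (wordProd (L ++ [j])) =
        insert (wordProd L j, wordProd L (j + 1)) (inversions n (wordProd L)) := by
      simpa using inversions_mul_swap hred.supportedIn (hL j (by simp)) hlt
    rw [hinv]
    by_cases hmL : m ∈ L
    · obtain ⟨u, hu, v, hv, huv⟩ := ih hred hmL
      exact ⟨u, hu, v, hv, mem_insert_of_mem huv⟩
    · -- no earlier letter is `s_m`, so the last one swaps a value `≤ m` with one `> m`
      obtain rfl : m = j := by simpa [hmL] using hm
      have hB := mapsTo_wordProd_of_not_mem hmL
      exact ⟨_, (apply_le_iff_of_mapsTo hB).2 le_rfl, _,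
        lt_of_not_ge fun hle => by simpa using (apply_le_iff_of_mapsTo hB).1 hle,
        mem_insert_self _ _⟩

lemma IsRWord.not_mem_of_mapsTo {L : List ℕ} (h : IsRWord n π L)
    (hB : Set.MapsTo π (Set.Iic m) (Set.Iic m)) : m ∉ L := fun hm => by
  obtain ⟨u, hu, v, hv, huv⟩ := h.exists_inversion_of_mem hm
  have hlt := (mem_inversions.1 huv).2.2
  have := (inv_apply_le_iff_of_mapsTo hB).2 hu
  have := (inv_apply_le_iff_of_mapsTo hB (x := v)).1 (by omega)
  omega

end Parabolic

section SortingWords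

variable {m : ℕ} {t L M : List ℕ}

def flag (m : ℕ) (L : List ℕ) : List ℕ := if m ∈ L then [m] else []

lemma flag_sublist : flag m L <+ [m] := by
  unfold flag; split_ifs <;> simp

lemma flag_sublist_flag (h : M <+ L) : flag m M <+ flag m L := by
  unfold flag
  split_ifs with hM hL
  · rfl
  · exact absurd (h.subset hM) hL
  · exact List.nil_sublist _
  · rfl

lemma flag_append_erase (hnt : m ∉ t) (h : L <+ m :: t) : flag m L ++ L.erase m = L := by
  obtain ⟨L₁, L₂, rfl, h₁, h₂⟩ := List.sublist_append_iff.1 (show L <+ [m] ++ t from h)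
  have hL₂ : m ∉ L₂ := fun hm => hnt (h₂.subset hm)
  rcases List.sublist_singleton.1 h₁ with rfl | rfl <;> simp [flag, hL₂]

lemma erase_append_flag (hnt : m ∉ t) (h : L <+ t ++ [m]) : L.erase m ++ flag m L = L := by
  obtain ⟨L₁, L₂, rfl, h₁, h₂⟩ := List.sublist_append_iff.1 h
  have hL₁ : m ∉ L₁ := fun hm => hnt (h₁.subset hm)
  rcases List.sublist_singleton.1 h₂ with rfl | rfl <;>
    simp [flag, hL₁, List.erase_append_right _ hL₁]

lemma erase_sublist_of_sublist_cons (h : L <+ m :: t) : L.erase m <+ t := by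
  simpa using h.erase m

lemma erase_sublist_of_sublist_concat (hnt : m ∉ t) (h : L <+ t ++ [m]) : L.erase m <+ t := by
  simpa [List.erase_append_right _ hnt] using h.erase m

/-- Moves every letter `m` from the front of a factor to the end of the preceding factor;
the `m` at the front of the first factor is dropped. -/
def peel (m : ℕ) : List (List ℕ) → List (List ℕ)
  | [] => []
  | L :: F => (L.erase m ++ flag m (F.headD [])) :: peel m F

/-- Inverse of `peel`: moves every letter `m` from the end of a factor to the front of the next
one, the carried prefix `f` being put in front of the first factor. -/
def unpeel (m : ℕ) : List ℕ → List (List ℕ) → List (List ℕ)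
  | f, [] => if f = [] then [] else [f]
  | f, M :: F => (f ++ M.erase m) :: unpeel m (flag m M) F

lemma flatten_peel (hnt : m ∉ t) :
    ∀ {F : List (List ℕ)}, (∀ L ∈ F, L <+ m :: t) →
      flag m (F.headD []) ++ (peel m F).flatten = F.flatten
  | [], _ => by simp [flag, peel]
  | L :: F, h => by
    have ih := flatten_peel hnt fun L hL => h L (List.mem_cons_of_mem _ hL)
    simp only [peel, List.headD_cons, List.flatten_cons, List.append_assoc, ih]
    rw [← List.append_assoc, flag_append_erase hnt (h L List.mem_cons_self)]

lemma peel_sublist (hnt : m ∉ t) :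
    ∀ {F : List (List ℕ)}, (∀ L ∈ F, L <+ m :: t) → ∀ L ∈ peel m F, L <+ t ++ [m]
  | [], _ => by simp [peel]
  | L :: F, h => by
    simp only [peel, List.mem_cons, forall_eq_or_imp]
    exact ⟨(erase_sublist_of_sublist_cons (h L List.mem_cons_self)).append flag_sublist,
      peel_sublist hnt fun L hL => h L (List.mem_cons_of_mem _ hL)⟩

lemma erase_append_flag_sublist {N : List ℕ} (hML : M <+ L) (hNM : N <+ M) :
    M.erase m ++ flag m N <+ L.erase m ++ flag m M := by
  by_cases hm : m ∈ M
  · rw [show flag m M = [m] from if_pos hm]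
    exact (hML.erase m).append flag_sublist
  · rw [flag, if_neg fun hN => hm (hNM.subset hN), List.append_nil]
    exact (hML.erase m).trans (List.sublist_append_left _ _)

lemma headD_sublist_of_isChain_cons {F : List (List ℕ)}
    (h : (M :: F).IsChain (fun f g => g <+ f)) : F.headD [] <+ M := by
  cases F with
  | nil => exact List.nil_sublist _
  | cons N F => exact (List.isChain_cons_cons.1 h).1

lemma isChain_peel :
    ∀ {F : List (List ℕ)}, F.IsChain (fun f g => g <+ f) →
      (peel m F).IsChain (fun f g => g <+ f)
  | [], _ => by simp [peel]
  | [L], _ => by simp [peel]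
  | L :: M :: F, h => by
    have hNM := headD_sublist_of_isChain_cons h.tail
    rw [List.isChain_cons_cons] at h
    exact List.IsChain.cons_cons (erase_append_flag_sublist h.1 hNM) (isChain_peel h.2)

lemma flatten_unpeel (hnt : m ∉ t) :
    ∀ {F : List (List ℕ)} (f : List ℕ), (∀ M ∈ F, M <+ t ++ [m]) →
      (unpeel m f F).flatten = f ++ F.flatten
  | [], f, _ => by by_cases hf : f = [] <;> simp [unpeel, hf]
  | M :: F, f, h => by
    have ih := flatten_unpeel hnt (flag m M) fun M hM => h M (List.mem_cons_of_mem _ hM)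
    simp only [unpeel, List.flatten_cons, ih, List.append_assoc]
    rw [← List.append_assoc (M.erase m), erase_append_flag hnt (h M List.mem_cons_self)]

lemma unpeel_sublist (hnt : m ∉ t) :
    ∀ {F : List (List ℕ)} {f : List ℕ}, f <+ [m] → (∀ M ∈ F, M <+ t ++ [m]) →
      ∀ L ∈ unpeel m f F, L <+ m :: t
  | [], f, hf, _ => by
    by_cases h : f = [] <;> simp only [unpeel, h, if_false, List.mem_singleton]
    · simp
    · rintro L rfl
      exact hf.trans (by simp)
  | M :: F, f, hf, h => by
    simp only [unpeel, List.mem_cons, forall_eq_or_imp]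
    exact ⟨hf.append (erase_sublist_of_sublist_concat hnt (h M List.mem_cons_self)),
      unpeel_sublist hnt flag_sublist fun M hM => h M (List.mem_cons_of_mem _ hM)⟩

lemma head?_unpeel_sublist :
    ∀ {F : List (List ℕ)} {f : List ℕ},
      ∀ g ∈ (unpeel m f F).head?, g <+ f ++ (F.headD []).erase m
  | [], f => by by_cases h : f = [] <;> simp [unpeel, h]
  | M :: F, f => by simp [unpeel]

lemma isChain_unpeel :
    ∀ {F : List (List ℕ)} {f : List ℕ}, F.IsChain (fun f g => g <+ f) →
      flag m (F.headD []) <+ f → (unpeel m f F).IsChain (fun f g => g <+ f)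
  | [], f, _, _ => by by_cases h : f = [] <;> simp [unpeel, h]
  | M :: F, f, hF, hf => by
    have hNM := headD_sublist_of_isChain_cons hF
    simp only [unpeel]
    refine List.isChain_cons.2 ⟨fun g hg => ?_, isChain_unpeel hF.tail (flag_sublist_flag hNM)⟩
    exact (head?_unpeel_sublist g hg).trans (hf.append (hNM.erase m))

lemma not_mem_flatten_of_isChain :
    ∀ {F : List (List ℕ)}, F.IsChain (fun f g => g <+ f) → m ∉ F.headD [] → m ∉ F.flatten
  | [], _, _ => by simp
  | [L], _, hm => by simpa using hm
  | L :: M :: F, hF, hm => by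
    rw [List.isChain_cons_cons] at hF
    have := not_mem_flatten_of_isChain hF.2 fun h => hm (hF.1.subset h)
    simp_all

lemma flatten_eq_cons_peel (hnt : m ∉ t) {F : List (List ℕ)} (hF : ∀ L ∈ F, L <+ m :: t)
    (hm : m ∈ F.headD []) : F.flatten = m :: (peel m F).flatten := by
  rw [← flatten_peel hnt hF, flag, if_pos hm]
  rfl

variable {n : ℕ} {π : Perm ℕ}

lemma csortable_cons_iff_of_descent (hπ : SupportedIn n π) (hm : m ∈ Icc 1 (n - 1))
    (hnt : m ∉ t) (hd : π⁻¹ (m + 1) < π⁻¹ m) :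
    CSortable n (m :: t) π ↔ CSortable n (t ++ [m]) (swap m (m + 1) * π) := by
  constructor
  · rintro ⟨F, hsub, hF, hred⟩
    have hhead : m ∈ F.headD [] := by
      by_contra hm'
      have hB := mapsTo_wordProd_of_not_mem (not_mem_flatten_of_isChain hF hm')
      rw [hred.2.1] at hB
      have := (inv_apply_le_iff_of_mapsTo hB).2 le_rfl
      have := (inv_apply_le_iff_of_mapsTo hB (x := m + 1)).not.2 (by omega)
      omega
    rw [flatten_eq_cons_peel hnt hsub hhead, isRWord_cons_iff hm hπ hd] at hred
    exact ⟨peel m F, peel_sublist hnt hsub, isChain_peel hF, hred⟩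
  · rintro ⟨F, hsub, hF, hred⟩
    refine ⟨unpeel m [m] F, unpeel_sublist hnt (List.Sublist.refl _) hsub,
      isChain_unpeel hF flag_sublist, ?_⟩
    rw [flatten_unpeel hnt _ hsub]
    exact (isRWord_cons_iff hm hπ hd).2 hred

lemma csortable_cons_iff_of_ascent (hnt : m ∉ t) (hd : π⁻¹ m < π⁻¹ (m + 1)) :
    CSortable n (m :: t) π ↔
      Set.MapsTo π (Set.Iic m) (Set.Iic m) ∧ CSortable n (t ++ [m]) π := by
  constructor
  · rintro ⟨F, hsub, hF, hred⟩
    have hhead : m ∉ F.headD [] := fun hm => by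
      rw [flatten_eq_cons_peel hnt hsub hm] at hred
      exact lt_asymm hd hred.inv_lt_of_cons
    have hW := not_mem_flatten_of_isChain hF hhead
    refine ⟨hred.2.1 ▸ mapsTo_wordProd_of_not_mem hW, F, fun L hL => ?_, hF, hred⟩
    have hmL : m ∉ L := fun h => hW (List.mem_flatten.2 ⟨L, hL, h⟩)
    rw [← List.erase_of_not_mem hmL]
    exact (erase_sublist_of_sublist_cons (hsub L hL)).trans (List.sublist_append_left _ _)
  · rintro ⟨hB, F, hsub, hF, hred⟩
    have hW := hred.not_mem_of_mapsTo hB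
    refine ⟨F, fun L hL => ?_, hF, hred⟩
    have hmL : m ∉ L := fun h => hW (List.mem_flatten.2 ⟨L, hL, h⟩)
    rw [← List.erase_of_not_mem hmL]
    exact (erase_sublist_of_sublist_concat hnt (hsub L hL)).trans (List.sublist_cons_self _ _)

end SortingWords

/-- `π` contains the pattern `jki`: a `231` whose `2` is the value `j`. -/
def Has231At (n : ℕ) (π : Perm ℕ) (j : ℕ) : Prop :=
  ∃ p q r : ℕ, 1 ≤ p ∧ p < q ∧ q < r ∧ r ≤ n ∧ π p = j ∧ j < π q ∧ π r < j

/-- `π` contains the pattern `kij`: a `312` whose `2` is the value `j`. -/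
def Has312At (n : ℕ) (π : Perm ℕ) (j : ℕ) : Prop :=
  ∃ p q r : ℕ, 1 ≤ p ∧ p < q ∧ q < r ∧ r ≤ n ∧ j < π p ∧ π q < j ∧ π r = j

section Patterns

variable {n m j : ℕ} {π : Perm ℕ}

lemma Has231At.bounds (hπ : SupportedIn n π) (h : Has231At n π j) : 2 ≤ j ∧ j + 1 ≤ n := by
  obtain ⟨p, q, r, hp, hpq, hqr, hr, -, hq', hr'⟩ := h
  have := hπ.apply_bounds (x := q) (by omega) (by omega)
  have := hπ.apply_bounds (x := r) (by omega) hr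
  omega

lemma Has312At.bounds (hπ : SupportedIn n π) (h : Has312At n π j) : 2 ≤ j ∧ j + 1 ≤ n := by
  obtain ⟨p, q, r, hp, hpq, hqr, hr, hp', hq', -⟩ := h
  have := hπ.apply_bounds (x := p) hp (by omega)
  have := hπ.apply_bounds (x := q) (by omega) (by omega)
  omega

lemma has231At_swap_mul_iff (hjm : j ≠ m) (hjm' : j ≠ m + 1) :
    Has231At n (swap m (m + 1) * π) j ↔ Has231At n π j := by
  refine exists_congr fun p => exists_congr fun q => exists_congr fun r => ?_
  simp only [Perm.mul_apply, swap_apply_def]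
  split_ifs <;> omega

lemma has312At_swap_mul_iff (hjm : j ≠ m) (hjm' : j ≠ m + 1) :
    Has312At n (swap m (m + 1) * π) j ↔ Has312At n π j := by
  refine exists_congr fun p => exists_congr fun q => exists_congr fun r => ?_
  simp only [Perm.mul_apply, swap_apply_def]
  split_ifs <;> omega

lemma has231At_swap_mul_succ_iff (hd : π⁻¹ (m + 1) < π⁻¹ m) :
    Has231At n (swap m (m + 1) * π) (m + 1) ↔ Has231At n π m := by
  have hpos : ∀ x y, π x = y ↔ x = π⁻¹ y := fun _ _ => Perm.eq_inv_iff_eq.symm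
  refine exists_congr fun p => exists_congr fun q => exists_congr fun r => ?_
  have := hpos p m; have := hpos q (m + 1); have := hpos r (m + 1)
  simp only [Perm.mul_apply, swap_apply_def]
  split_ifs <;> omega

lemma has312At_swap_mul_iff_succ (hd : π⁻¹ (m + 1) < π⁻¹ m) :
    Has312At n (swap m (m + 1) * π) m ↔ Has312At n π (m + 1) := by
  have hpos : ∀ x y, π x = y ↔ x = π⁻¹ y := fun _ _ => Perm.eq_inv_iff_eq.symm
  refine exists_congr fun p => exists_congr fun q => exists_congr fun r => ?_
  have := hpos p m; have := hpos q m; have := hpos r (m + 1)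
  simp only [Perm.mul_apply, swap_apply_def]
  split_ifs <;> omega

end Patterns

section Avoidance

variable {n m : ℕ} {t : List ℕ} {π : Perm ℕ}

lemma apply_le_of_mapsTo_of_lt (hB : Set.MapsTo π (Set.Iic m) (Set.Iic m)) {p r : ℕ}
    (hpr : p < r) (hr : π r ≤ m) : π p ≤ m :=
  hB (Set.mem_Iic.2 (hpr.le.trans ((apply_le_iff_of_mapsTo hB).1 hr)))

lemma Has231At.ne_of_mapsTo (hB : Set.MapsTo π (Set.Iic m) (Set.Iic m)) {j : ℕ}
    (h : Has231At n π j) : j ≠ m ∧ j ≠ m + 1 := by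
  obtain ⟨p, q, r, -, hpq, hqr, -, hp, hq, hr⟩ := h
  constructor <;> rintro rfl
  · have := apply_le_of_mapsTo_of_lt hB hqr hr.le; omega
  · have := apply_le_of_mapsTo_of_lt hB (hpq.trans hqr) (by omega); omega

lemma Has312At.ne_of_mapsTo (hB : Set.MapsTo π (Set.Iic m) (Set.Iic m)) {j : ℕ}
    (h : Has312At n π j) : j ≠ m ∧ j ≠ m + 1 := by
  obtain ⟨p, q, r, -, hpq, hqr, -, hp, hq, hr⟩ := h
  constructor <;> rintro rfl
  · have := apply_le_of_mapsTo_of_lt hB (hpq.trans hqr) hr.le; omega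
  · have := apply_le_of_mapsTo_of_lt hB hpq (by omega); omega

/-- A pair `p < r` with `π r ≤ m < π p` completes the values `m, m + 1` to one of the two
patterns. -/
lemma has231At_or_has312At_of_not_mapsTo (hπ : SupportedIn n π) (hd : π⁻¹ m < π⁻¹ (m + 1))
    (hB : ¬Set.MapsTo π (Set.Iic m) (Set.Iic m)) : Has231At n π m ∨ Has312At n π (m + 1) := by
  obtain ⟨p, hp, hpm⟩ : ∃ p, p ≤ m ∧ m < π p := by
    simpa [Set.MapsTo] using hB
  obtain ⟨r, hr, hrm⟩ : ∃ r, m < r ∧ π r ≤ m := by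
    by_contra! h
    have hinv : Set.MapsTo (π⁻¹ : Perm ℕ) (Set.Iic m) (Set.Iic m) := by
      intro y hy
      by_contra hlt
      have := h (π⁻¹ y) (not_le.1 hlt)
      rw [Perm.coe_inv, apply_symm_apply] at this
      exact absurd (Set.mem_Iic.1 hy) (not_le.2 this)
    exact hB (by simpa using π⁻¹.perm_symm_mapsTo_of_mapsTo hinv)
  have hp1 : 1 ≤ p := Nat.one_le_iff_ne_zero.2 fun h0 => by
    rw [h0, hπ 0 (by simp)] at hpm; omega
  have hrn : r ≤ n := not_lt.1 fun hlt => by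
    rw [hπ r (by simp; omega)] at hrm; omega
  have := hπ.apply_bounds hp1 (by omega : p ≤ n)
  have ha := hπ.inv.apply_bounds (x := m) (by omega) (by omega)
  have hb := hπ.inv.apply_bounds (x := m + 1) (by omega) (by omega)
  have hpos : ∀ x y, π x = y ↔ x = π⁻¹ y := fun _ _ => Perm.eq_inv_iff_eq.symm
  have := hpos p (m + 1); have := hpos r m; have := hpos r (m + 1)
  rcases lt_or_gt_of_ne (show r ≠ π⁻¹ (m + 1) by omega) with hrb | hbr
  · exact Or.inr ⟨p, r, π⁻¹ (m + 1), hp1, by omega, hrb, hb.2, by omega, by omega, by simp⟩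
  · exact Or.inl ⟨π⁻¹ m, π⁻¹ (m + 1), r, ha.1, hd, hbr, hrn, by simp, by simp, by omega⟩

lemma idxOf_rotate (hnt : m ∉ t) {a : ℕ} (ha : a ∈ t) :
    (m :: t).idxOf a = (t ++ [m]).idxOf a + 1 ∧ (t ++ [m]).idxOf a < (t ++ [m]).idxOf m := by
  rw [List.idxOf_cons_ne t (ne_of_mem_of_not_mem ha hnt).symm, List.idxOf_append_of_mem ha,
    List.idxOf_append_of_notMem hnt, List.idxOf_cons_self]
  exact ⟨rfl, by simpa using List.idxOf_lt_length_iff.2 ha⟩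

/-- The avoidance condition of the theorem in contrapositive form; the range `2 ≤ j ≤ n - 1`
is automatic (`Has231At.bounds`, `Has312At.bounds`). -/
def Avoids (n : ℕ) (c : List ℕ) (π : Perm ℕ) : Prop :=
  (∀ j, Has231At n π j → c.idxOf (j - 1) ≤ c.idxOf j) ∧
    (∀ j, Has312At n π j → c.idxOf j ≤ c.idxOf (j - 1))

lemma avoids_iff (hπ : SupportedIn n π) {c : List ℕ} :
    Avoids n c π ↔
      (∀ j, 2 ≤ j → j ≤ n - 1 → c.idxOf j < c.idxOf (j - 1) → ¬Has231At n π j) ∧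
        (∀ j, 2 ≤ j → j ≤ n - 1 → c.idxOf (j - 1) < c.idxOf j → ¬Has312At n π j) := by
  constructor
  · rintro ⟨hU, hD⟩
    exact ⟨fun j _ _ hlt hj => (hU j hj).not_gt hlt, fun j _ _ hlt hj => (hD j hj).not_gt hlt⟩
  · rintro ⟨hU, hD⟩
    refine ⟨fun j hj => not_lt.1 fun hlt => ?_, fun j hj => not_lt.1 fun hlt => ?_⟩
    · exact hU j (hj.bounds hπ).1 (by have := (hj.bounds hπ).2; omega) hlt hj
    · exact hD j (hj.bounds hπ).1 (by have := (hj.bounds hπ).2; omega) hlt hj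

lemma avoids_one (n : ℕ) (c : List ℕ) : Avoids n c 1 := by
  refine ⟨fun j ⟨p, q, r, _, _, _, _, hp, _, hr⟩ => ?_,
    fun j ⟨p, q, r, _, _, _, _, _, hq, hr⟩ => ?_⟩
  all_goals simp only [Perm.one_apply] at *; omega

end Avoidance

section AvoidsRotation

variable {n m : ℕ} {t : List ℕ} {π : Perm ℕ}

lemma idxOf_rotate_of_ne (hnt : m ∉ t) (hmem : ∀ a, a ∈ m :: t ↔ a ∈ Icc 1 (n - 1)) (a : ℕ)
    (h1 : 1 ≤ a) (h2 : a + 1 ≤ n) (ha : a ≠ m) :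
    (m :: t).idxOf a = (t ++ [m]).idxOf a + 1 ∧ (t ++ [m]).idxOf a < (t ++ [m]).idxOf m :=
  idxOf_rotate hnt (List.mem_of_ne_of_mem ha ((hmem a).2 (by simp only [mem_Icc]; omega)))

lemma idxOf_le_idxOf_rotate_iff (hnt : m ∉ t) (hmem : ∀ a, a ∈ m :: t ↔ a ∈ Icc 1 (n - 1))
    {j : ℕ} (h2 : 2 ≤ j) (hn : j + 1 ≤ n) (hjm : j ≠ m ∧ j ≠ m + 1) :
    ((m :: t).idxOf (j - 1) ≤ (m :: t).idxOf j ↔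
        (t ++ [m]).idxOf (j - 1) ≤ (t ++ [m]).idxOf j) ∧
      ((m :: t).idxOf j ≤ (m :: t).idxOf (j - 1) ↔
        (t ++ [m]).idxOf j ≤ (t ++ [m]).idxOf (j - 1)) := by
  have := idxOf_rotate_of_ne hnt hmem j (by omega) hn hjm.1
  have := idxOf_rotate_of_ne hnt hmem (j - 1) (by omega) (by omega) (by omega)
  omega

lemma Avoids.rotate_of_descent (hπ : SupportedIn n π) (hnt : m ∉ t)
    (hmem : ∀ a, a ∈ m :: t ↔ a ∈ Icc 1 (n - 1)) (hd : π⁻¹ (m + 1) < π⁻¹ m)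
    (hA : Avoids n (m :: t) π) : Avoids n (t ++ [m]) (swap m (m + 1) * π) := by
  have hπ' := (supportedIn_swap ((hmem m).1 List.mem_cons_self)).mul hπ
  have rot := idxOf_rotate_of_ne hnt hmem
  have h0 : (m :: t).idxOf m = 0 := List.idxOf_cons_self
  refine ⟨fun j hj => ?_, fun j hj => ?_⟩
  · obtain ⟨h2, hn⟩ := hj.bounds hπ'
    obtain rfl | hjm := eq_or_ne j m
    · have := rot (j - 1) (by omega) (by omega) (by omega); omega
    obtain rfl | hjm' := eq_or_ne j (m + 1)
    · have h := (has231At_swap_mul_succ_iff hd).1 hj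
      have := hA.1 m h
      have := (h.bounds hπ).1
      have := rot (m - 1) (by omega) (by omega) (by omega); omega
    · exact (idxOf_le_idxOf_rotate_iff hnt hmem h2 hn ⟨hjm, hjm'⟩).1.1
        (hA.1 j ((has231At_swap_mul_iff hjm hjm').1 hj))
  · obtain ⟨h2, hn⟩ := hj.bounds hπ'
    obtain rfl | hjm := eq_or_ne j m
    · have h := (has312At_swap_mul_iff_succ hd).1 hj
      have := hA.2 (j + 1) h
      have := rot (j + 1) (by omega) (h.bounds hπ).2 (by omega)
      simp only [Nat.add_sub_cancel] at *; omega
    obtain rfl | hjm' := eq_or_ne j (m + 1)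
    · have := rot (m + 1) (by omega) hn hjm; simp only [Nat.add_sub_cancel] at *; omega
    · exact (idxOf_le_idxOf_rotate_iff hnt hmem h2 hn ⟨hjm, hjm'⟩).2.1
        (hA.2 j ((has312At_swap_mul_iff hjm hjm').1 hj))

lemma Avoids.of_rotate_of_descent (hπ : SupportedIn n π) (hnt : m ∉ t)
    (hmem : ∀ a, a ∈ m :: t ↔ a ∈ Icc 1 (n - 1)) (hd : π⁻¹ (m + 1) < π⁻¹ m)
    (hA : Avoids n (t ++ [m]) (swap m (m + 1) * π)) : Avoids n (m :: t) π := by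
  have hπ' := (supportedIn_swap ((hmem m).1 List.mem_cons_self)).mul hπ
  have rot := idxOf_rotate_of_ne hnt hmem
  have h0 : (m :: t).idxOf m = 0 := List.idxOf_cons_self
  refine ⟨fun j hj => ?_, fun j hj => ?_⟩
  · obtain ⟨h2, hn⟩ := hj.bounds hπ
    obtain rfl | hjm := eq_or_ne j m
    · have h := (has231At_swap_mul_succ_iff hd).2 hj
      have := hA.1 (j + 1) h
      have := rot (j + 1) (by omega) (h.bounds hπ').2 (by omega)
      simp only [Nat.add_sub_cancel] at *; omega
    obtain rfl | hjm' := eq_or_ne j (m + 1)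
    · simp only [Nat.add_sub_cancel, h0]; omega
    · exact (idxOf_le_idxOf_rotate_iff hnt hmem h2 hn ⟨hjm, hjm'⟩).1.2
        (hA.1 j ((has231At_swap_mul_iff hjm hjm').2 hj))
  · obtain ⟨h2, hn⟩ := hj.bounds hπ
    obtain rfl | hjm := eq_or_ne j m
    · rw [h0]; omega
    obtain rfl | hjm' := eq_or_ne j (m + 1)
    · have h := (has312At_swap_mul_iff_succ hd).2 hj
      have := hA.2 m h
      have := (h.bounds hπ').1
      have := rot (m - 1) (by omega) (by omega) (by omega); omega
    · exact (idxOf_le_idxOf_rotate_iff hnt hmem h2 hn ⟨hjm, hjm'⟩).2.2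
        (hA.2 j ((has312At_swap_mul_iff hjm hjm').2 hj))

lemma avoids_cons_iff_of_descent (hπ : SupportedIn n π) (hnt : m ∉ t)
    (hmem : ∀ a, a ∈ m :: t ↔ a ∈ Icc 1 (n - 1)) (hd : π⁻¹ (m + 1) < π⁻¹ m) :
    Avoids n (m :: t) π ↔ Avoids n (t ++ [m]) (swap m (m + 1) * π) :=
  ⟨Avoids.rotate_of_descent hπ hnt hmem hd, Avoids.of_rotate_of_descent hπ hnt hmem hd⟩

lemma Avoids.mapsTo_of_ascent (hπ : SupportedIn n π) (hnt : m ∉ t)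
    (hmem : ∀ a, a ∈ m :: t ↔ a ∈ Icc 1 (n - 1)) (hd : π⁻¹ m < π⁻¹ (m + 1))
    (hA : Avoids n (m :: t) π) : Set.MapsTo π (Set.Iic m) (Set.Iic m) := by
  by_contra hB
  have h0 : (m :: t).idxOf m = 0 := List.idxOf_cons_self
  rcases has231At_or_has312At_of_not_mapsTo hπ hd hB with h | h
  · have := hA.1 m h
    have := h.bounds hπ
    have := idxOf_rotate_of_ne hnt hmem (m - 1) (by omega) (by omega) (by omega); omega
  · have := hA.2 (m + 1) h
    have := idxOf_rotate_of_ne hnt hmem (m + 1) (by omega) (h.bounds hπ).2 (by omega)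
    simp only [Nat.add_sub_cancel] at *; omega

lemma avoids_cons_iff_of_mapsTo (hπ : SupportedIn n π) (hnt : m ∉ t)
    (hmem : ∀ a, a ∈ m :: t ↔ a ∈ Icc 1 (n - 1)) (hB : Set.MapsTo π (Set.Iic m) (Set.Iic m)) :
    Avoids n (m :: t) π ↔ Avoids n (t ++ [m]) π := by
  refine and_congr (forall_congr' fun j => imp_congr_right fun hj => ?_)
    (forall_congr' fun j => imp_congr_right fun hj => ?_)
  · exact (idxOf_le_idxOf_rotate_iff hnt hmem (hj.bounds hπ).1 (hj.bounds hπ).2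
      (hj.ne_of_mapsTo hB)).1
  · exact (idxOf_le_idxOf_rotate_iff hnt hmem (hj.bounds hπ).1 (hj.bounds hπ).2
      (hj.ne_of_mapsTo hB)).2

lemma avoids_cons_iff_of_ascent (hπ : SupportedIn n π) (hnt : m ∉ t)
    (hmem : ∀ a, a ∈ m :: t ↔ a ∈ Icc 1 (n - 1)) (hd : π⁻¹ m < π⁻¹ (m + 1)) :
    Avoids n (m :: t) π ↔ Set.MapsTo π (Set.Iic m) (Set.Iic m) ∧ Avoids n (t ++ [m]) π := by
  constructor
  · intro hA
    have hB := hA.mapsTo_of_ascent hπ hnt hmem hd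
    exact ⟨hB, (avoids_cons_iff_of_mapsTo hπ hnt hmem hB).1 hA⟩
  · rintro ⟨hB, hA⟩
    exact (avoids_cons_iff_of_mapsTo hπ hnt hmem hB).2 hA

end AvoidsRotation

lemma csortable_one (n : ℕ) (c : List ℕ) : CSortable n c 1 :=
  ⟨[], by simp, List.isChain_nil, isRWord_iff.2 ⟨by simp, rfl, by simp⟩⟩

lemma List.findIdx_concat_lt_findIdx_cons {α : Type*} {p : α → Bool} {a : α} {l : List α}
    (ha : p a = false) (h : ∃ x ∈ l, p x) : (l ++ [a]).findIdx p < (a :: l).findIdx p := by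
  rw [List.findIdx_cons, ha, List.findIdx_append, if_pos (List.findIdx_lt_length_of_exists h)]
  simp

theorem csortable_iff_avoids {n : ℕ} {c : List ℕ} (hnd : c.Nodup)
    (hmem : ∀ a, a ∈ c ↔ a ∈ Icc 1 (n - 1)) {π : Perm ℕ} (hπ : SupportedIn n π) :
    CSortable n c π ↔ Avoids n c π := by
  obtain rfl | hne := eq_or_ne π 1
  · exact iff_of_true (csortable_one n c) (avoids_one n c)
  obtain ⟨j, hj, hdj⟩ := hπ.inv.exists_descent (inv_ne_one.2 hne)
  match c, hnd, hmem with
  | [], _, hmem => exact absurd ((hmem j).2 hj) List.not_mem_nil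
  | m :: t, hnd, hmem =>
    have hnt := (List.nodup_cons.1 hnd).1
    have hrot : (m :: t).rotate 1 = t ++ [m] := by simp
    have hnd' : (t ++ [m]).Nodup := hrot ▸ List.nodup_rotate.2 hnd
    have hmem' : ∀ a, a ∈ t ++ [m] ↔ a ∈ Icc 1 (n - 1) :=
      fun a => hrot ▸ List.mem_rotate.trans (hmem a)
    have hm := (hmem m).1 List.mem_cons_self
    rcases (show π⁻¹ m ≠ π⁻¹ (m + 1) by simp).lt_or_gt with hd | hd
    · rw [csortable_cons_iff_of_ascent hnt hd, avoids_cons_iff_of_ascent hπ hnt hmem hd,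
        csortable_iff_avoids hnd' hmem' hπ]
    · rw [csortable_cons_iff_of_descent hπ hm hnt hd, avoids_cons_iff_of_descent hπ hnt hmem hd]
      exact csortable_iff_avoids hnd' hmem' ((supportedIn_swap hm).mul hπ)
termination_by (numInversions n π, c.findIdx fun a => decide (π⁻¹ (a + 1) < π⁻¹ a))
decreasing_by
  · refine Prod.Lex.right _ (List.findIdx_concat_lt_findIdx_cons (by simpa using hd.le) ?_)
    refine ⟨j, List.mem_of_ne_of_mem ?_ ((hmem j).2 hj), by simpa using hdj⟩
    rintro rfl
    exact lt_asymm hd hdj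
  · exact Prod.Lex.left _ _ (by have := numInversions_swap_mul_of_gt hπ hm hd; omega)

/-- Let `c` be a Coxeter element of `S_n` (each letter `s_1, …, s_{n-1}` exactly once)
and let `U_c, D_c` partition `[2, n-1]`, with `j ∈ U_c` iff `s_j` appears before
`s_{j-1}` in `c`.  A permutation `π ∈ S_n` is `c`-sortable if and only if `π` avoids the
patterns `jki` for all `j ∈ U_c` and `kij` for all `j ∈ D_c` (with `i < j < k`). -/
theorem c_sortable_iff_pattern_avoidance (n : ℕ) (c : List ℕ)
    (hnd : c.Nodup) (hmem : ∀ m : ℕ, m ∈ c ↔ m ∈ Finset.Icc 1 (n - 1))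
    (π : Equiv.Perm ℕ) (hπ : ∀ x : ℕ, x ∉ Finset.Icc 1 n → π x = x) :
    CSortable n c π ↔
      ((∀ j : ℕ, 2 ≤ j → j ≤ n - 1 → c.idxOf j < c.idxOf (j - 1) →
          ¬∃ p q r : ℕ, 1 ≤ p ∧ p < q ∧ q < r ∧ r ≤ n ∧
            π p = j ∧ j < π q ∧ π r < j) ∧
       (∀ j : ℕ, 2 ≤ j → j ≤ n - 1 → c.idxOf (j - 1) < c.idxOf j →
          ¬∃ p q r : ℕ, 1 ≤ p ∧ p < q ∧ q < r ∧ r ≤ n ∧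
            j < π p ∧ π q < j ∧ π r = j)) :=
  (csortable_iff_avoids hnd hmem hπ).trans (avoids_iff hπ)
end
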